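/- arXiv:math/0409463 — 2 statements merged into one kernel-verified Lean document; each statement's English description precedes it below -/
import Mathlib

section
/- For adjoint operators d_i of the ribbon Schur operators u_i (with respect to the inner product making partitions orthonormal), u_i d_j = d_j u_i whenever i ≠ j. -/
open scoped Classical

noncomputable section RibbonSchur

/-- The base field `ℂ(q)` of rational functions. -/
abbrev K : Type := RatFunc ℂ

/-- The variable `q`. -/
def q : K := RatFunc.X

/-- The Fock space: free `K`-module on the set of partitions (Young diagrams). -/
abbrev F : Type := YoungDiagram →₀ K

/-- Cells of the skew shape `mu / lam`. -/
def skewCells (lam mu : YoungDiagram) : Finset (ℕ × ℕ) := mu.cells \ lam.cells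

/-- Two cells are adjacent if they share an edge. -/
def CellAdj (a b : ℕ × ℕ) : Prop :=
  (a.1 = b.1 ∧ (a.2 = b.2 + 1 ∨ b.2 = a.2 + 1)) ∨
  (a.2 = b.2 ∧ (a.1 = b.1 + 1 ∨ b.1 = a.1 + 1))

/-- `mu / lam` is an `n`-ribbon with head (top-right box, of maximal content) on diagonal `i`:
a connected skew shape of size `n` containing no `2 × 2` square. -/
def IsRibbon (n : ℕ) (lam mu : YoungDiagram) (i : ℤ) : Prop :=
  lam ≤ mu ∧ (skewCells lam mu).card = n ∧
  (∀ a ∈ skewCells lam mu, ∀ b ∈ skewCells lam mu,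
    Relation.ReflTransGen
      (fun x y => x ∈ skewCells lam mu ∧ y ∈ skewCells lam mu ∧ CellAdj x y) a b) ∧
  (¬ ∃ r c : ℕ, (r, c) ∈ skewCells lam mu ∧ (r + 1, c) ∈ skewCells lam mu ∧
      (r, c + 1) ∈ skewCells lam mu ∧ (r + 1, c + 1) ∈ skewCells lam mu) ∧
  (∃ p ∈ skewCells lam mu, (p.2 : ℤ) - (p.1 : ℤ) = i ∧
    ∀ p' ∈ skewCells lam mu, (p'.2 : ℤ) - (p'.1 : ℤ) ≤ (p.2 : ℤ) - (p.1 : ℤ))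

/-- The spin of the skew shape `mu / lam`: number of occupied rows minus 1. -/
def spin (lam mu : YoungDiagram) : ℕ := ((skewCells lam mu).image Prod.fst).card - 1

/-- The spin, as an integer. -/
def spinZ (lam mu : YoungDiagram) : ℤ := (((skewCells lam mu).image Prod.fst).card : ℤ) - 1

/-- The image of the basis vector `lam` under the ribbon Schur operator `u_i`. -/
def uVec (n : ℕ) (i : ℤ) (lam : YoungDiagram) : F :=
  if h : ∃ mu, IsRibbon n lam mu i then
    q ^ spin lam (Classical.choose h) • Finsupp.single (Classical.choose h) 1
  else 0

/-- The ribbon Schur operator `u_i`, adding an `n`-ribbon with head on diagonal `i`,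
weighted by `q ^ spin`. -/
def u (n : ℕ) (i : ℤ) : Module.End K F :=
  Finsupp.lsum K fun lam => LinearMap.toSpanSingleton K F (uVec n i lam)

/-- The image of the basis vector `lam` under the adjoint operator `d_i`. -/
def dVec (n : ℕ) (i : ℤ) (lam : YoungDiagram) : F :=
  if h : ∃ mu, IsRibbon n mu lam i then
    q ^ spin (Classical.choose h) lam • Finsupp.single (Classical.choose h) 1
  else 0

/-- The adjoint `d_i` of the ribbon Schur operator `u_i` (with respect to the inner
product making partitions orthonormal): it removes an `n`-ribbon with head on diagonal `i`. -/
def d (n : ℕ) (i : ℤ) : Module.End K F :=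
  Finsupp.lsum K fun lam => LinearMap.toSpanSingleton K F (dVec n i lam)

/-- The monomial `u_{i_k} ⋯ u_{i_1}` for the list `l = [i_k, …, i_1]` (leftmost factor
applied last). -/
def ribbonMonomial (n : ℕ) (l : List ℤ) : Module.End K F := (l.map (u n)).prod

/-- The monomial `d_{i_1} ⋯ d_{i_k}` for the list `l = [i_1, …, i_k]`. -/
def dMonomial (n : ℕ) (l : List ℤ) : Module.End K F := (l.map (d n)).prod

/-- The image of the basis vector `lam` under
`h_k(u) = ∑_{i_1 < ⋯ < i_k} u_{i_k} ⋯ u_{i_1}` (a locally finite sum). -/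
def hVec (n k : ℕ) (lam : YoungDiagram) : F :=
  ∑ᶠ l : List ℤ,
    if l.Pairwise (· > ·) ∧ l.length = k then ribbonMonomial n l (Finsupp.single lam 1) else 0

/-- The noncommutative homogeneous symmetric function
`h_k(u) = ∑_{i_1 < ⋯ < i_k} u_{i_k} ⋯ u_{i_1}` in the ribbon Schur operators. -/
def hOp (n k : ℕ) : Module.End K F :=
  Finsupp.lsum K fun lam => LinearMap.toSpanSingleton K F (hVec n k lam)

/-- The image of the basis vector `lam` under
`h_k^⊥(u) = ∑_{i_1 < ⋯ < i_k} d_{i_1} ⋯ d_{i_k}`. -/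
def hPerpVec (n k : ℕ) (lam : YoungDiagram) : F :=
  ∑ᶠ l : List ℤ,
    if l.Pairwise (· < ·) ∧ l.length = k then dMonomial n l (Finsupp.single lam 1) else 0

/-- The adjoint `h_k^⊥(u) = ∑_{i_1 < ⋯ < i_k} d_{i_1} ⋯ d_{i_k}`,
removing a horizontal ribbon strip of size `k`. -/
def hPerp (n k : ℕ) : Module.End K F :=
  Finsupp.lsum K fun lam => LinearMap.toSpanSingleton K F (hPerpVec n k lam)



namespace RS

/-- The `r`-th beta-ish number of a partition. -/
def sfun (μ : YoungDiagram) (r : ℕ) : ℤ := (μ.rowLen r : ℤ) - 1 - r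

/-- The beta-set of a partition. -/
def Sset (μ : YoungDiagram) : Set ℤ := Set.range (sfun μ)

lemma sfun_strictAnti (μ : YoungDiagram) : StrictAnti (sfun μ) := by
  apply strictAnti_nat_of_succ_lt
  intro r
  have h := μ.rowLen_anti r (r+1) (Nat.le_succ r)
  simp only [sfun]
  push_cast
  omega

lemma sfun_zero_row {μ : YoungDiagram} {r : ℕ} (h : μ.rowLen r = 0) :
    sfun μ r = -1 - r := by simp [sfun, h]

lemma rowLen_zero_of_ge {μ : YoungDiagram} {r : ℕ} (h : μ.colLen 0 ≤ r) :
    μ.rowLen r = 0 := by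
  by_contra hne
  have : (r, 0) ∈ μ := by
    rw [YoungDiagram.mem_iff_lt_rowLen]; omega
  rw [YoungDiagram.mem_iff_lt_colLen] at this
  omega

lemma mem_Sset_of_lt {μ : YoungDiagram} {x : ℤ} (h : x < -(μ.colLen 0 : ℤ)) :
    x ∈ Sset μ := by
  refine ⟨(-1 - x).toNat, ?_⟩
  have hx : (-1 - x).toNat = -1 - x := Int.toNat_of_nonneg (by omega)
  have hge : μ.colLen 0 ≤ (-1 - x).toNat := by omega
  rw [sfun_zero_row (rowLen_zero_of_ge hge)]
  omega

lemma strictAnti_range_eq {f g : ℕ → ℤ} (hf : StrictAnti f) (hg : StrictAnti g)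
    (h : Set.range f = Set.range g) : f = g := by
  funext m
  induction m using Nat.strong_induction_on with
  | _ m ih =>
    obtain ⟨k, hk⟩ : f m ∈ Set.range g := h ▸ Set.mem_range_self m
    obtain ⟨l, hl⟩ : g m ∈ Set.range f := h.symm ▸ Set.mem_range_self m
    rcases lt_trichotomy k m with hkm | hkm | hkm
    · have hfk : f k = f m := (ih k hkm).trans hk
      exact absurd (hf.injective hfk) (by omega)
    · subst hkm; exact hk.symm
    · rcases lt_trichotomy l m with hlm | hlm | hlm
      · have hgl : g l = g m := (ih l hlm).symm.trans hl
        exact absurd (hg.injective hgl) (by omega)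
      · subst hlm; exact hl
      · have e1 : f m < g m := hk ▸ hg hkm
        have e2 : g m < f m := hl ▸ hf hlm
        omega

lemma youngDiagram_ext_rowLen {μ ν : YoungDiagram}
    (h : ∀ r, μ.rowLen r = ν.rowLen r) : μ = ν := by
  ext ⟨r, c⟩
  rw [YoungDiagram.mem_cells, YoungDiagram.mem_cells,
    YoungDiagram.mem_iff_lt_rowLen, YoungDiagram.mem_iff_lt_rowLen, h r]

lemma Sset_injective {μ ν : YoungDiagram} (h : Sset μ = Sset ν) : μ = ν := by
  have := strictAnti_range_eq (sfun_strictAnti μ) (sfun_strictAnti ν) h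
  apply youngDiagram_ext_rowLen
  intro r
  have := congrFun this r
  simp only [sfun] at this
  omega

lemma le_iff_rowLen {lam mu : YoungDiagram} :
    lam ≤ mu ↔ ∀ r, lam.rowLen r ≤ mu.rowLen r := by
  constructor
  · intro h r
    rcases Nat.eq_zero_or_pos (lam.rowLen r) with h0 | h0
    · omega
    · have : (r, lam.rowLen r - 1) ∈ lam := by rw [YoungDiagram.mem_iff_lt_rowLen]; omega
      have h2 := h this
      rw [YoungDiagram.mem_iff_lt_rowLen] at h2
      have := h2
      omega
  · intro h p hp
    obtain ⟨r, c⟩ := p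
    rw [YoungDiagram.mem_iff_lt_rowLen] at *
    exact lt_of_lt_of_le hp (h r)

lemma mem_skewCells {lam mu : YoungDiagram} {r c : ℕ} :
    (r, c) ∈ skewCells lam mu ↔ lam.rowLen r ≤ c ∧ c < mu.rowLen r := by
  simp only [skewCells, Finset.mem_sdiff, YoungDiagram.mem_cells,
    YoungDiagram.mem_iff_lt_rowLen]
  omega

/-- Row-structure description of an `n`-ribbon `mu / lam` with head on diagonal `i`. -/
def RibbonRows (n : ℕ) (lam mu : YoungDiagram) (i : ℤ) : Prop :=
  ∃ r1 r2 : ℕ, r1 ≤ r2 ∧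
    (∀ r, r < r1 → mu.rowLen r = lam.rowLen r) ∧
    (∀ r, r2 < r → mu.rowLen r = lam.rowLen r) ∧
    (∀ r, r1 ≤ r → r ≤ r2 → lam.rowLen r < mu.rowLen r) ∧
    (∀ r, r1 ≤ r → r < r2 → mu.rowLen (r+1) = lam.rowLen r + 1) ∧
    sfun mu r1 = i ∧ sfun lam r2 = i - n

end RS
namespace RS

lemma cellAdj_symm {a b : ℕ × ℕ} (h : CellAdj a b) : CellAdj b a := by
  unfold CellAdj at h ⊢; tauto

lemma cellAdj_row {a b : ℕ × ℕ} (h : CellAdj a b) :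
    a.1 = b.1 ∨ a.1 = b.1 + 1 ∨ b.1 = a.1 + 1 := by
  unfold CellAdj at h; tauto

section Structure

variable {lam mu : YoungDiagram} {r1 r2 : ℕ} {i : ℤ} {n : ℕ}

/-- local notation for the path relation -/
def Rel (lam mu : YoungDiagram) (x y : ℕ × ℕ) : Prop :=
  x ∈ skewCells lam mu ∧ y ∈ skewCells lam mu ∧ CellAdj x y

lemma skewCells_eq_biUnion
    (hout1 : ∀ r, r < r1 → mu.rowLen r = lam.rowLen r)
    (hout2 : ∀ r, r2 < r → mu.rowLen r = lam.rowLen r) :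
    skewCells lam mu =
      (Finset.Icc r1 r2).biUnion
        (fun r => {r} ×ˢ Finset.Ico (lam.rowLen r) (mu.rowLen r)) := by
  ext ⟨r, c⟩
  simp only [Finset.mem_biUnion, Finset.mem_Icc, Finset.mem_product, mem_skewCells,
    Finset.mem_Ico, Finset.mem_singleton]
  constructor
  · rintro ⟨h1, h2⟩
    refine ⟨r, ⟨?_, ?_⟩, rfl, h1, h2⟩
    · by_contra h; have := hout1 r (by omega); omega
    · by_contra h; have := hout2 r (by omega); omega
  · rintro ⟨r', ⟨_, _⟩, rfl, h1, h2⟩; exact ⟨h1, h2⟩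

lemma card_skew
    (hout1 : ∀ r, r < r1 → mu.rowLen r = lam.rowLen r)
    (hout2 : ∀ r, r2 < r → mu.rowLen r = lam.rowLen r) :
    (skewCells lam mu).card = ∑ r ∈ Finset.Icc r1 r2, (mu.rowLen r - lam.rowLen r) := by
  rw [skewCells_eq_biUnion hout1 hout2, Finset.card_biUnion]
  · refine Finset.sum_congr rfl fun r _ => ?_
    rw [Finset.card_product, Finset.card_singleton, Nat.card_Ico, one_mul]
  · intro x _ y _ hxy
    simp only [Finset.disjoint_left, Finset.mem_product, Finset.mem_singleton]
    rintro ⟨a, b⟩ ⟨rfl, -⟩ ⟨rfl, -⟩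
    exact hxy rfl

lemma telescope (h12 : r1 ≤ r2)
    (hov : ∀ r, r1 ≤ r → r < r2 → mu.rowLen (r+1) = lam.rowLen r + 1) :
    (∑ r ∈ Finset.Icc r1 r2, ((mu.rowLen r : ℤ) - (lam.rowLen r : ℤ)))
      = sfun mu r1 - sfun lam r2 := by
  induction r2, h12 using Nat.le_induction with
  | base => rw [Finset.Icc_self, Finset.sum_singleton]; unfold sfun; ring
  | succ m hm ih =>
    rw [Finset.sum_Icc_succ_top (by omega), ih (fun r h1 h2 => hov r h1 (by omega))]
    have := hov m hm (by omega)
    simp only [sfun]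
    push_cast [this]
    ring

lemma image_fst_skew
    (hout1 : ∀ r, r < r1 → mu.rowLen r = lam.rowLen r)
    (hout2 : ∀ r, r2 < r → mu.rowLen r = lam.rowLen r)
    (hin : ∀ r, r1 ≤ r → r ≤ r2 → lam.rowLen r < mu.rowLen r) :
    (skewCells lam mu).image Prod.fst = Finset.Icc r1 r2 := by
  rw [skewCells_eq_biUnion hout1 hout2, Finset.biUnion_image]
  ext r
  simp only [Finset.mem_biUnion, Finset.mem_Icc]
  constructor
  · rintro ⟨a, ha, hb⟩
    simp only [Finset.mem_image, Finset.mem_product, Finset.mem_singleton] at hb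
    obtain ⟨⟨x, y⟩, ⟨rfl, -⟩, rfl⟩ := hb
    exact ha
  · intro hr
    refine ⟨r, hr, ?_⟩
    simp only [Finset.mem_image, Finset.mem_product, Finset.mem_singleton, Finset.mem_Ico]
    exact ⟨(r, lam.rowLen r), ⟨rfl, le_refl _, hin r hr.1 hr.2⟩, rfl⟩

lemma rtg_row {r c c' : ℕ} (hcc : c ≤ c') (hc : (r, c) ∈ skewCells lam mu)
    (hc' : (r, c') ∈ skewCells lam mu) :
    Relation.ReflTransGen (Rel lam mu) (r, c) (r, c') := by
  induction c', hcc using Nat.le_induction with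
  | base => exact Relation.ReflTransGen.refl
  | succ m hm ih =>
    have hmem : (r, m) ∈ skewCells lam mu := by
      rw [mem_skewCells] at hc hc' ⊢
      omega
    exact (ih hmem).tail ⟨hmem, hc', Or.inl ⟨rfl, Or.inr rfl⟩⟩

lemma rtg_to_anchor
    (hle : ∀ r, lam.rowLen r ≤ mu.rowLen r)
    (hin : ∀ r, r1 ≤ r → r ≤ r2 → lam.rowLen r < mu.rowLen r)
    (hov : ∀ r, r1 ≤ r → r < r2 → mu.rowLen (r+1) = lam.rowLen r + 1) :
    ∀ k r c, r2 - r = k → r1 ≤ r → r ≤ r2 → (r, c) ∈ skewCells lam mu →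
      Relation.ReflTransGen (Rel lam mu) (r, c) (r2, lam.rowLen r2) := by
  intro k
  induction k with
  | zero =>
    intro r c hk h1 h2 hc
    have : r = r2 := by omega
    subst this
    have hc2 : (r, lam.rowLen r) ∈ skewCells lam mu := by
      rw [mem_skewCells]; exact ⟨le_refl _, hin r h1 h2⟩
    have := rtg_row (c := lam.rowLen r) (c' := c) (by rw [mem_skewCells] at hc; omega) hc2 hc
    exact ((@Relation.ReflTransGen.stdSymm _ (Rel lam mu) ⟨fun x y ⟨h1, h2, h3⟩ => ⟨h2, h1, cellAdj_symm h3⟩⟩).symm _ _ this)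
  | succ k ih =>
    intro r c hk h1 h2 hc
    have hr : r < r2 := by omega
    have hcl : (r, lam.rowLen r) ∈ skewCells lam mu := by
      rw [mem_skewCells]; exact ⟨le_refl _, hin r h1 h2⟩
    have h1' := rtg_row (by rw [mem_skewCells] at hc; omega) hcl hc
    have h1'' := (@Relation.ReflTransGen.stdSymm _ (Rel lam mu)
      ⟨fun x y ⟨h1, h2, h3⟩ => ⟨h2, h1, cellAdj_symm h3⟩⟩).symm _ _ h1'
    have hnext : (r + 1, lam.rowLen r) ∈ skewCells lam mu := by
      rw [mem_skewCells]
      constructor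
      · have := lam.rowLen_anti r (r+1) (by omega); omega
      · rw [hov r h1 hr]; omega
    have hstep : Relation.ReflTransGen (Rel lam mu) (r, lam.rowLen r) (r+1, lam.rowLen r) :=
      Relation.ReflTransGen.single ⟨hcl, hnext, Or.inr ⟨rfl, Or.inr rfl⟩⟩
    exact (h1''.trans hstep).trans (ih (r+1) (lam.rowLen r) (by omega) (by omega) (by omega) hnext)

lemma isRibbon_of_rows (h : RibbonRows n lam mu i) : IsRibbon n lam mu i := by
  obtain ⟨r1, r2, h12, hout1, hout2, hin, hov, hhead, htail⟩ := h
  have hle : ∀ r, lam.rowLen r ≤ mu.rowLen r := by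
    intro r
    rcases lt_or_ge r r1 with h | h
    · exact (hout1 r h).ge
    · rcases le_or_gt r r2 with h' | h'
      · exact (hin r h h').le
      · exact (hout2 r h').ge
  have hlemu : lam ≤ mu := le_iff_rowLen.mpr hle
  have hcard : (skewCells lam mu).card = n := by
    have h1 := card_skew hout1 hout2
    have h2 := telescope h12 hov
    have h3 : ((∑ r ∈ Finset.Icc r1 r2, (mu.rowLen r - lam.rowLen r) : ℕ) : ℤ)
        = ∑ r ∈ Finset.Icc r1 r2, ((mu.rowLen r : ℤ) - (lam.rowLen r : ℤ)) := by
      push_cast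
      refine Finset.sum_congr rfl fun r hr => ?_
      rw [Finset.mem_Icc] at hr
      have := hin r hr.1 hr.2
      push_cast
      omega
    have : ((skewCells lam mu).card : ℤ) = n := by
      rw [h1, h3, h2, hhead, htail]; ring
    exact_mod_cast this
  have hrow_mem : ∀ r c, (r, c) ∈ skewCells lam mu → r1 ≤ r ∧ r ≤ r2 := by
    intro r c hc
    rw [mem_skewCells] at hc
    constructor
    · by_contra h; have := hout1 r (by omega); omega
    · by_contra h; have := hout2 r (by omega); omega
  refine ⟨hlemu, hcard, ?_, ?_, ?_⟩
  · -- connectivity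
    rintro ⟨ra, ca⟩ ha ⟨rb, cb⟩ hb
    have hA := hrow_mem ra ca ha
    have hB := hrow_mem rb cb hb
    have h1 := rtg_to_anchor hle hin hov (r2 - ra) ra ca rfl hA.1 hA.2 ha
    have h2 := rtg_to_anchor hle hin hov (r2 - rb) rb cb rfl hB.1 hB.2 hb
    have h2' := (@Relation.ReflTransGen.stdSymm _ (Rel lam mu)
      ⟨fun x y ⟨u1, u2, u3⟩ => ⟨u2, u1, cellAdj_symm u3⟩⟩).symm _ _ h2
    exact h1.trans h2'
  · -- no 2x2
    rintro ⟨r, c, h1, h2, h3, h4⟩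
    rw [mem_skewCells] at h1 h2 h3 h4
    have hr1 : r1 ≤ r ∧ r ≤ r2 := by
      constructor
      · by_contra h; have := hout1 r (by omega); omega
      · by_contra h; have := hout2 (r+1) (by omega); omega
    have hrlt : r < r2 := by
      by_contra h; have := hout2 (r+1) (by omega); omega
    have := hov r hr1.1 hrlt
    omega
  · -- head
    refine ⟨(r1, mu.rowLen r1 - 1), ?_, ?_, ?_⟩
    · rw [mem_skewCells]
      have := hin r1 (le_refl _) h12
      omega
    · have := hin r1 (le_refl _) h12
      simp only [sfun] at hhead
      push_cast
      omega
    · rintro ⟨r, c⟩ hp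
      have hmem := hrow_mem r c hp
      rw [mem_skewCells] at hp
      have hanti := mu.rowLen_anti r1 r hmem.1
      have := hin r1 (le_refl _) h12
      push_cast
      omega

end Structure

end RS
namespace RS

lemma cellAdj_col {a b : ℕ × ℕ} (h : CellAdj a b) (hne : a.1 ≠ b.1) : a.2 = b.2 := by
  unfold CellAdj at h; tauto

section L1

variable {lam mu : YoungDiagram} {i : ℤ} {n : ℕ}

lemma path_rows {a b : ℕ × ℕ}
    (h : Relation.ReflTransGen
      (fun x y => x ∈ skewCells lam mu ∧ y ∈ skewCells lam mu ∧ CellAdj x y) a b)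
    (ha : a ∈ skewCells lam mu) :
    ∀ r, a.1 ≤ r → r ≤ b.1 → ∃ c, (r, c) ∈ skewCells lam mu := by
  induction h with
  | refl =>
    intro r h1 h2
    obtain rfl : r = a.1 := le_antisymm h2 h1
    exact ⟨a.2, by simpa using ha⟩
  | @tail b c h1 step ih =>
    obtain ⟨hb, hc, adj⟩ := step
    intro r hr1 hr2
    rcases le_or_gt r b.1 with h | h
    · exact ih r hr1 h
    · have := cellAdj_row adj
      obtain rfl : r = c.1 := by omega
      exact ⟨c.2, by simpa using hc⟩

lemma path_stay {r0 : ℕ} (hno : mu.rowLen (r0+1) ≤ lam.rowLen r0) {a b : ℕ × ℕ}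
    (h : Relation.ReflTransGen
      (fun x y => x ∈ skewCells lam mu ∧ y ∈ skewCells lam mu ∧ CellAdj x y) a b)
    (ha : a.1 ≤ r0) : b.1 ≤ r0 := by
  induction h with
  | refl => exact ha
  | @tail b c h1 step ih =>
    obtain ⟨hb, hc, adj⟩ := step
    by_contra hgt
    have hrows := cellAdj_row adj
    have hb1 : b.1 = r0 := by omega
    have hc1 : c.1 = r0 + 1 := by omega
    have hcol : b.2 = c.2 := cellAdj_col adj (by omega)
    obtain ⟨br, bc⟩ := b
    obtain ⟨cr, cc⟩ := c
    simp only at hb1 hc1 hcol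
    subst hb1 hc1 hcol
    rw [mem_skewCells] at hb hc
    omega

lemma rows_of_isRibbon (h : IsRibbon n lam mu i) : RibbonRows n lam mu i := by
  obtain ⟨hle, hcard, hconn, hno22, ⟨pr, pc⟩, hp, hpc, hpmax⟩ := h
  have hlerow : ∀ r, lam.rowLen r ≤ mu.rowLen r := le_iff_rowLen.mp hle
  set O := (skewCells lam mu).image Prod.fst with hO
  have hne : O.Nonempty := ⟨pr, Finset.mem_image_of_mem _ hp⟩
  set r1 := O.min' hne with hr1def
  set r2 := O.max' hne with hr2def
  have hOmem : ∀ r, r ∈ O ↔ lam.rowLen r < mu.rowLen r := by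
    intro r
    constructor
    · intro hr
      obtain ⟨⟨x, y⟩, hxy, rfl⟩ := Finset.mem_image.mp hr
      rw [mem_skewCells] at hxy
      show lam.rowLen x < mu.rowLen x
      omega
    · intro hr
      exact Finset.mem_image.mpr ⟨(r, lam.rowLen r), mem_skewCells.mpr ⟨le_refl _, hr⟩, rfl⟩
  have h12 : r1 ≤ r2 := O.min'_le _ (O.max'_mem hne)
  -- cells in rows r1 and r2
  obtain ⟨⟨x1, y1⟩, hc1, hx1⟩ := Finset.mem_image.mp (O.min'_mem hne)
  obtain ⟨⟨x2, y2⟩, hc2, hx2⟩ := Finset.mem_image.mp (O.max'_mem hne)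
  have hout1 : ∀ r, r < r1 → mu.rowLen r = lam.rowLen r := by
    intro r hr
    have : r ∉ O := fun hmem => absurd (O.min'_le r hmem) (by omega)
    rw [hOmem] at this
    have := hlerow r
    omega
  have hout2 : ∀ r, r2 < r → mu.rowLen r = lam.rowLen r := by
    intro r hr
    have : r ∉ O := fun hmem => absurd (O.le_max' r hmem) (by omega)
    rw [hOmem] at this
    have := hlerow r
    omega
  have hin : ∀ r, r1 ≤ r → r ≤ r2 → lam.rowLen r < mu.rowLen r := by
    intro r ha hb
    have hpath := hconn _ hc1 _ hc2
    have := path_rows hpath hc1 r (by rw [hx1]; exact ha) (by rw [hx2, ← hr2def]; exact hb)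
    obtain ⟨c, hc⟩ := this
    rw [mem_skewCells] at hc
    omega
  have hov : ∀ r, r1 ≤ r → r < r2 → mu.rowLen (r+1) = lam.rowLen r + 1 := by
    intro r ha hb
    have hocc1 : lam.rowLen r < mu.rowLen r := hin r ha (by omega)
    have hocc2 : lam.rowLen (r+1) < mu.rowLen (r+1) := hin (r+1) (by omega) (by omega)
    -- overlap: lam.rowLen r < mu.rowLen (r+1)
    have hoverlap : lam.rowLen r < mu.rowLen (r+1) := by
      by_contra hcontra
      have hA : (r, lam.rowLen r) ∈ skewCells lam mu := mem_skewCells.mpr ⟨le_refl _, hocc1⟩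
      have hB : (r+1, lam.rowLen (r+1)) ∈ skewCells lam mu :=
        mem_skewCells.mpr ⟨le_refl _, hocc2⟩
      have hpath := hconn _ hA _ hB
      have := path_stay (r0 := r) (by omega) hpath (by simp)
      simp at this
    -- no 2x2 gives the other inequality
    have hno : ¬ (lam.rowLen r + 1 < mu.rowLen (r+1)) := by
      intro hcontra
      apply hno22
      refine ⟨r, lam.rowLen r, ?_, ?_, ?_, ?_⟩ <;> rw [mem_skewCells]
      · have := mu.rowLen_anti r (r+1) (by omega); omega
      · have := lam.rowLen_anti r (r+1) (by omega); omega
      · have := mu.rowLen_anti r (r+1) (by omega); omega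
      · have := lam.rowLen_anti r (r+1) (by omega); omega
    omega
  have hhead : sfun mu r1 = i := by
    have hr1occ := hin r1 (le_refl _) h12
    have hq : (r1, mu.rowLen r1 - 1) ∈ skewCells lam mu := mem_skewCells.mpr ⟨by omega, by omega⟩
    have h1 := hpmax _ hq
    have hprO : pr ∈ O := Finset.mem_image_of_mem _ hp
    have hprge : r1 ≤ pr := O.min'_le pr hprO
    rw [mem_skewCells] at hp
    have hanti := mu.rowLen_anti r1 pr hprge
    simp only at h1 hpc ⊢
    unfold sfun
    push_cast at h1 hpc ⊢
    omega
  have htail : sfun lam r2 = i - n := by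
    have h1 := card_skew hout1 hout2
    have h2 := telescope h12 hov
    have h3 : ((∑ r ∈ Finset.Icc r1 r2, (mu.rowLen r - lam.rowLen r) : ℕ) : ℤ)
        = ∑ r ∈ Finset.Icc r1 r2, ((mu.rowLen r : ℤ) - (lam.rowLen r : ℤ)) := by
      push_cast
      refine Finset.sum_congr rfl fun r hr => ?_
      rw [Finset.mem_Icc] at hr
      have := hin r hr.1 hr.2
      omega
    have h4 : (n : ℤ) = sfun mu r1 - sfun lam r2 := by
      rw [← h2, ← h3, ← h1, hcard]
    rw [hhead] at h4
    omega
  exact ⟨r1, r2, h12, hout1, hout2, hin, hov, hhead, htail⟩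

end L1

end RS
namespace RS

/-- number of beta-numbers of `lam` strictly between `i - n` and `i`. -/
def cnt (n : ℕ) (i : ℤ) (lam : YoungDiagram) : ℕ :=
  ((Finset.Ioo (i - n) i).filter (fun s => s ∈ Sset lam)).card

section Sets

variable {lam mu : YoungDiagram} {i : ℤ} {n : ℕ}

lemma rows_data (h : RibbonRows n lam mu i) :
    ∃ r1 r2 : ℕ, r1 ≤ r2 ∧
      (∀ r, r < r1 → sfun mu r = sfun lam r) ∧
      (∀ r, r2 < r → sfun mu r = sfun lam r) ∧
      (∀ r, r1 < r → r ≤ r2 → sfun mu r = sfun lam (r - 1)) ∧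
      sfun mu r1 = i ∧ sfun lam r2 = i - n ∧
      sfun lam r1 < i ∧
      (∀ r, r < r1 → i < sfun lam r) := by
  obtain ⟨r1, r2, h12, hout1, hout2, hin, hov, hhead, htail⟩ := h
  refine ⟨r1, r2, h12, ?_, ?_, ?_, hhead, htail, ?_, ?_⟩
  · intro r hr; unfold sfun; rw [hout1 r hr]
  · intro r hr; unfold sfun; rw [hout2 r hr]
  · intro r hr1 hr2
    have := hov (r - 1) (by omega) (by omega)
    have hr : r - 1 + 1 = r := by omega
    rw [hr] at this
    unfold sfun
    rw [this]
    push_cast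
    omega
  · have := hin r1 (le_refl _) h12
    unfold sfun at hhead ⊢
    omega
  · intro r hr
    have h1 : sfun mu r = sfun lam r := by unfold sfun; rw [hout1 r hr]
    have h2 : sfun mu r1 = i := hhead
    have := sfun_strictAnti mu (show r < r1 from hr)
    omega

lemma rows_to_sets (h : RibbonRows n lam mu i) :
    i - n ∈ Sset lam ∧ i ∉ Sset lam ∧ Sset mu = insert i (Sset lam \ {i - n}) := by
  obtain ⟨r1, r2, h12, e1, e2, emid, ehead, etail, elt, egt⟩ := rows_data h
  have hnpos : i - n < i := by
    rcases Nat.eq_or_lt_of_le h12 with he | hlt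
    · rw [he] at elt; omega
    · have := sfun_strictAnti lam hlt
      omega
  refine ⟨⟨r2, etail⟩, ?_, ?_⟩
  · rintro ⟨r, hr⟩
    rcases lt_or_ge r r1 with hc | hc
    · have := egt r hc; omega
    · have : sfun lam r ≤ sfun lam r1 := (sfun_strictAnti lam).antitone hc
      omega
  · ext x
    simp only [Set.mem_insert_iff, Set.mem_diff, Set.mem_singleton_iff]
    constructor
    · rintro ⟨r, rfl⟩
      rcases lt_trichotomy r r1 with hc | hc | hc
      · refine Or.inr ⟨⟨r, (e1 r hc).symm⟩, ?_⟩
        have := egt r hc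
        rw [e1 r hc]
        omega
      · subst hc; exact Or.inl ehead
      · rcases le_or_gt r r2 with hc2 | hc2
        · refine Or.inr ⟨⟨r - 1, (emid r hc hc2).symm⟩, ?_⟩
          rw [emid r hc hc2]
          rcases lt_or_ge (r-1) r2 with hc3 | hc3
          · have := sfun_strictAnti lam hc3; omega
          · have : r - 1 = r2 := by omega
            omega
        · refine Or.inr ⟨⟨r, (e2 r hc2).symm⟩, ?_⟩
          rw [e2 r hc2]
          have := sfun_strictAnti lam hc2
          omega
    · rintro (rfl | ⟨⟨r, rfl⟩, hne⟩)
      · exact ⟨r1, ehead⟩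
      · rcases lt_or_ge r r1 with hc | hc
        · exact ⟨r, e1 r hc⟩
        · rcases lt_or_ge r r2 with hc2 | hc2
          · refine ⟨r + 1, ?_⟩
            rw [emid (r+1) (by omega) (by omega)]
            simp
          · rcases eq_or_lt_of_le hc2 with he | hlt2
            · exact absurd (he ▸ etail) hne
            · exact ⟨r, e2 r hlt2⟩

lemma rows_spin (h : RibbonRows n lam mu i) : spin lam mu = cnt n i lam := by
  obtain ⟨r1, r2, h12, hout1, hout2, hin, hov, hhead, htail⟩ := h
  have hgt : ∀ r, r < r1 → i < sfun lam r := by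
    intro r hr
    have h1 : sfun mu r = sfun lam r := by unfold sfun; rw [hout1 r hr]
    have := sfun_strictAnti mu (show r < r1 from hr)
    omega
  have helt : sfun lam r1 < i := by
    have := hin r1 (le_refl _) h12
    unfold sfun at hhead ⊢
    omega
  have hspin : spin lam mu = r2 - r1 := by
    unfold spin
    rw [image_fst_skew hout1 hout2 hin, Nat.card_Icc]
    omega
  have hfilter : ((Finset.Ioo (i - n) i).filter (fun s => s ∈ Sset lam))
      = (Finset.Ico r1 r2).image (sfun lam) := by
    ext x
    simp only [Finset.mem_filter, Finset.mem_Ioo, Finset.mem_image, Finset.mem_Ico]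
    constructor
    · rintro ⟨⟨hx1, hx2⟩, r, rfl⟩
      refine ⟨r, ⟨?_, ?_⟩, rfl⟩
      · by_contra hc
        have := hgt r (by omega)
        omega
      · by_contra hc
        have : sfun lam r ≤ sfun lam r2 := (sfun_strictAnti lam).antitone (by omega)
        omega
    · rintro ⟨r, ⟨ha, hb⟩, rfl⟩
      have hle : sfun lam r ≤ sfun lam r1 := (sfun_strictAnti lam).antitone ha
      have hgt2 : sfun lam r2 < sfun lam r := sfun_strictAnti lam hb
      exact ⟨⟨by omega, by omega⟩, ⟨r, rfl⟩⟩
  unfold cnt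
  rw [hfilter, Finset.card_image_of_injective _ (sfun_strictAnti lam).injective,
    Nat.card_Ico, hspin]

end Sets

end RS
namespace RS

lemma anti_of_succ {f : ℕ → ℕ} (hf : ∀ r, f (r + 1) ≤ f r) :
    ∀ a b, a ≤ b → f b ≤ f a := by
  intro a b h
  induction b, h using Nat.le_induction with
  | base => exact le_refl _
  | succ m hm ih => exact (hf m).trans ih

/-- Young diagram with row lengths given by an antitone, eventually-zero function. -/
def ofRowFn (f : ℕ → ℕ) (hf : ∀ r, f (r + 1) ≤ f r) (N : ℕ) (hN : ∀ r, N ≤ r → f r = 0) :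
    YoungDiagram where
  cells := (Finset.range N ×ˢ Finset.range (f 0 + 1)).filter fun p => p.2 < f p.1
  isLowerSet := by
    rintro ⟨r, c⟩ ⟨r', c'⟩ hle hm
    obtain ⟨hr, hc⟩ := Prod.mk_le_mk.mp hle
    simp only [Finset.coe_filter, Set.mem_setOf_eq, Finset.mem_product, Finset.mem_range] at hm ⊢
    obtain ⟨⟨hm1, hm2⟩, hm3⟩ := hm
    have hanti := anti_of_succ hf r' r hr
    refine ⟨⟨by omega, ?_⟩, by omega⟩
    have := anti_of_succ hf 0 r' (by omega)
    omega

lemma mem_ofRowFn {f : ℕ → ℕ} {hf : ∀ r, f (r + 1) ≤ f r} {N : ℕ}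
    {hN : ∀ r, N ≤ r → f r = 0} {r c : ℕ} :
    (r, c) ∈ ofRowFn f hf N hN ↔ c < f r := by
  rw [← YoungDiagram.mem_cells]
  show (r, c) ∈ Finset.filter _ _ ↔ _
  simp only [Finset.mem_filter, Finset.mem_product, Finset.mem_range]
  constructor
  · rintro ⟨-, h⟩; exact h
  · intro h
    have hrN : r < N := by
      by_contra hc
      have := hN r (by omega)
      omega
    have := anti_of_succ hf 0 r (by omega)
    exact ⟨⟨hrN, by omega⟩, h⟩

lemma rowLen_eq_of_mem_iff {μ : YoungDiagram} {r m : ℕ}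
    (h : ∀ c, (r, c) ∈ μ ↔ c < m) : μ.rowLen r = m := by
  rcases lt_trichotomy (μ.rowLen r) m with hlt | he | hgt
  · have := (h (μ.rowLen r)).mpr hlt
    rw [YoungDiagram.mem_iff_lt_rowLen] at this
    omega
  · exact he
  · have := (h m).mp (YoungDiagram.mem_iff_lt_rowLen.mpr hgt)
    omega

lemma rowLen_ofRowFn {f : ℕ → ℕ} {hf : ∀ r, f (r + 1) ≤ f r} {N : ℕ}
    {hN : ∀ r, N ≤ r → f r = 0} (r : ℕ) :
    (ofRowFn f hf N hN).rowLen r = f r :=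
  rowLen_eq_of_mem_iff fun _ => mem_ofRowFn

section Exists

variable {lam : YoungDiagram} {i j : ℤ} {n : ℕ}

lemma sfun_rowLen (lam : YoungDiagram) (r : ℕ) : (lam.rowLen r : ℤ) = sfun lam r + 1 + r := by
  unfold sfun; ring

lemma exists_add (h1 : i - n ∈ Sset lam) (h2 : i ∉ Sset lam) :
    ∃ mu, RibbonRows n lam mu i := by
  obtain ⟨r2, hr2⟩ := h1
  have hni : i - n < i := by
    by_contra hc
    push_neg at hc
    -- then n = 0 and i = i - n ∈ Sset lam
    have : (n : ℤ) = 0 := by omega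
    exact h2 ⟨r2, by omega⟩
  have hex : ∃ r, sfun lam r < i := ⟨r2, by omega⟩
  classical
  set r1 := Nat.find hex with hr1def
  have hr1lt : sfun lam r1 < i := Nat.find_spec hex
  have hr1min : ∀ r, r < r1 → i + 1 ≤ sfun lam r := by
    intro r hr
    have h3 := Nat.find_min hex hr
    push_neg at h3
    rcases eq_or_lt_of_le h3 with he | hlt
    · exact absurd ⟨r, he.symm⟩ h2
    · omega
  have h12 : r1 ≤ r2 := Nat.find_le (by omega)
  -- row length function of mu
  set f : ℕ → ℕ := fun r =>
    if r < r1 then lam.rowLen r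
    else if r = r1 then (i + 1 + r1).toNat
    else if r ≤ r2 then lam.rowLen (r - 1) + 1
    else lam.rowLen r with hfdef
  have hfr1 : (f r1 : ℤ) = i + 1 + r1 := by
    have h0 : (0 : ℤ) ≤ i + 1 + r1 := by
      have : (-1 : ℤ) - r1 ≤ sfun lam r1 := by
        unfold sfun; have : (0:ℤ) ≤ lam.rowLen r1 := Int.ofNat_nonneg _; omega
      omega
    simp only [hfdef, if_neg (lt_irrefl r1), eq_self_iff_true, if_true]
    omega
  have hanti : ∀ r, f (r + 1) ≤ f r := by
    intro r
    have hZ : ∀ r, (lam.rowLen r : ℤ) = sfun lam r + 1 + r := sfun_rowLen lam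
    rcases lt_trichotomy (r + 1) r1 with hc | hc | hc
    · simp only [hfdef, if_pos hc, if_pos (by omega : r < r1)]
      exact lam.rowLen_anti r (r+1) (by omega)
    · -- r + 1 = r1
      have hr : r < r1 := by omega
      have hmin := hr1min r hr
      have hfr : (f r : ℤ) = (lam.rowLen r : ℤ) := by
        simp only [hfdef]; rw [if_pos hr]
      have hfr1' : (f (r+1) : ℤ) = i + 1 + r1 := by rw [hc]; exact hfr1
      have : (f (r+1) : ℤ) ≤ (f r : ℤ) := by
        rw [hfr1', hfr, hZ r]
        omega
      exact_mod_cast this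
    · -- r1 < r + 1, i.e. r1 ≤ r
      have hr1r : r1 ≤ r := by omega
      rcases eq_or_lt_of_le hr1r with he | hlt
      · -- r = r1
        rw [← he]
        rcases le_or_gt (r1 + 1) r2 with hc2 | hc2
        · have : (f (r1+1) : ℤ) ≤ (f r1 : ℤ) := by
            rw [hfr1]
            simp only [hfdef, if_neg (by omega : ¬ r1 + 1 < r1), if_neg (by omega : ¬ r1 + 1 = r1),
              if_pos hc2]
            have hs : r1 + 1 - 1 = r1 := by omega
            rw [hs]
            push_cast
            rw [hZ r1]
            omega
          exact_mod_cast this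
        · have hrr2 : r1 = r2 := by omega
          have : (f (r1+1) : ℤ) ≤ (f r1 : ℤ) := by
            rw [hfr1]
            simp only [hfdef, if_neg (by omega : ¬ r1 + 1 < r1), if_neg (by omega : ¬ r1 + 1 = r1),
              if_neg (by omega : ¬ r1 + 1 ≤ r2)]
            rw [hZ (r1+1)]
            have hs : sfun lam (r1 + 1) < sfun lam r1 := sfun_strictAnti lam (by omega)
            have hs2 : sfun lam r1 = i - n := by rw [hrr2]; exact hr2
            push_cast
            omega
          exact_mod_cast this
      · -- r1 < r
        rcases lt_trichotomy (r + 1) r2 with hc2 | hc2 | hc2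
        · simp only [hfdef, if_neg (by omega : ¬ r + 1 < r1), if_neg (by omega : ¬ r + 1 = r1),
            if_pos (by omega : r + 1 ≤ r2), if_neg (by omega : ¬ r < r1),
            if_neg (by omega : ¬ r = r1), if_pos (by omega : r ≤ r2)]
          have hs : r + 1 - 1 = r := by omega
          rw [hs]
          have := lam.rowLen_anti (r - 1) r (by omega)
          omega
        · simp only [hfdef, if_neg (by omega : ¬ r + 1 < r1), if_neg (by omega : ¬ r + 1 = r1),
            if_pos (by omega : r + 1 ≤ r2), if_neg (by omega : ¬ r < r1),
            if_neg (by omega : ¬ r = r1), if_pos (by omega : r ≤ r2)]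
          have hs : r + 1 - 1 = r := by omega
          rw [hs]
          have := lam.rowLen_anti (r - 1) r (by omega)
          omega
        · -- r + 1 > r2, r ≥ r1, r > r1 so r ≥ r1 + 1; r ≤ r2 or r > r2
          rcases le_or_gt r r2 with hc3 | hc3
          · -- r = r2
            simp only [hfdef, if_neg (by omega : ¬ r + 1 < r1), if_neg (by omega : ¬ r + 1 = r1),
              if_neg (by omega : ¬ r + 1 ≤ r2), if_neg (by omega : ¬ r < r1),
              if_neg (by omega : ¬ r = r1), if_pos hc3]
            have := lam.rowLen_anti (r - 1) (r + 1) (by omega)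
            have h4 := lam.rowLen_anti (r-1) r (by omega)
            omega
          · simp only [hfdef, if_neg (by omega : ¬ r + 1 < r1), if_neg (by omega : ¬ r + 1 = r1),
              if_neg (by omega : ¬ r + 1 ≤ r2), if_neg (by omega : ¬ r < r1),
              if_neg (by omega : ¬ r = r1), if_neg (by omega : ¬ r ≤ r2)]
            exact lam.rowLen_anti r (r+1) (by omega)
  have hNz : ∀ r, r2 + 1 + lam.colLen 0 ≤ r → f r = 0 := by
    intro r hr
    simp only [hfdef, if_neg (by omega : ¬ r < r1), if_neg (by omega : ¬ r = r1),
      if_neg (by omega : ¬ r ≤ r2)]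
    exact rowLen_zero_of_ge (by omega)
  refine ⟨ofRowFn f hanti _ hNz, r1, r2, h12, ?_, ?_, ?_, ?_, ?_, hr2⟩
  · intro r hr
    rw [rowLen_ofRowFn]
    simp only [hfdef, if_pos hr]
  · intro r hr
    rw [rowLen_ofRowFn]
    simp only [hfdef, if_neg (by omega : ¬ r < r1), if_neg (by omega : ¬ r = r1),
      if_neg (by omega : ¬ r ≤ r2)]
  · intro r ha hb
    rw [rowLen_ofRowFn]
    rcases eq_or_lt_of_le ha with he | hlt
    · rw [← he]
      have : (lam.rowLen r1 : ℤ) < (f r1 : ℤ) := by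
        rw [hfr1, sfun_rowLen]
        omega
      exact_mod_cast this
    · simp only [hfdef, if_neg (by omega : ¬ r < r1), if_neg (by omega : ¬ r = r1), if_pos hb]
      have := lam.rowLen_anti (r - 1) r (by omega)
      omega
  · intro r ha hb
    rw [rowLen_ofRowFn]
    simp only [hfdef, if_neg (by omega : ¬ r + 1 < r1), if_neg (by omega : ¬ r + 1 = r1),
      if_pos (by omega : r + 1 ≤ r2)]
    simp
  · show sfun _ r1 = i
    unfold sfun
    rw [rowLen_ofRowFn, hfr1]
    ring

end Exists

end RS
namespace RS

section ExistsRem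

variable {lam : YoungDiagram} {j : ℤ} {n : ℕ}

lemma exists_rem (h1 : j ∈ Sset lam) (h2 : j - n ∉ Sset lam) :
    ∃ mu, RibbonRows n mu lam j := by
  obtain ⟨r1, hr1⟩ := h1
  have hn1 : 1 ≤ n := by
    by_contra hc
    have : (n : ℤ) = 0 := by omega
    exact h2 ⟨r1, by omega⟩
  have hZ : ∀ r, (lam.rowLen r : ℤ) = sfun lam r + 1 + r := sfun_rowLen lam
  classical
  have hexP : ∃ r, sfun lam r < j - n := by
    refine ⟨lam.colLen 0 + ((n : ℤ) - j).toNat + 1, ?_⟩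
    have hz := rowLen_zero_of_ge
      (show lam.colLen 0 ≤ lam.colLen 0 + ((n : ℤ) - j).toNat + 1 by omega)
    rw [sfun_zero_row hz]
    omega
  set t := Nat.find hexP with htdef
  have htspec : sfun lam t < j - n := Nat.find_spec hexP
  have htmin : ∀ r, r < t → j - n < sfun lam r := by
    intro r hr
    have h3 := Nat.find_min hexP hr
    push_neg at h3
    rcases eq_or_lt_of_le h3 with he | hlt
    · exact absurd ⟨r, he.symm⟩ h2
    · exact hlt
  have hr1t : r1 < t := by
    by_contra hc
    push_neg at hc
    have : sfun lam r1 ≤ sfun lam t := (sfun_strictAnti lam).antitone hc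
    omega
  set r2 := t - 1 with hr2def
  have ht2 : t = r2 + 1 := by omega
  have hr2a : j - n < sfun lam r2 := htmin r2 (by omega)
  have hr2b : sfun lam (r2 + 1) < j - n := by rw [← ht2]; exact htspec
  have h12 : r1 ≤ r2 := by
    by_contra hc
    push_neg at hc
    have : sfun lam r1 ≤ sfun lam r2 + (r2 - r1) := by
      have := (sfun_strictAnti lam).antitone (show r2 ≤ r1 by omega)
      omega
    have hj : sfun lam r1 = j := hr1
    have : j - n < j → True := fun _ => trivial
    -- r1 > r2 means r1 ≥ t, contradiction with hr1t
    omega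
  have hjn_lb : -1 - (r2 : ℤ) ≤ j - n := by
    have := hZ (r2 + 1)
    have h0 : (0 : ℤ) ≤ lam.rowLen (r2 + 1) := Int.ofNat_nonneg _
    omega
  have hlam_r2_pos : 1 ≤ lam.rowLen r2 := by
    have := hZ r2
    omega
  set f : ℕ → ℕ := fun r =>
    if r < r1 then lam.rowLen r
    else if r < r2 then lam.rowLen (r + 1) - 1
    else if r = r2 then (j - n + 1 + r2).toNat
    else lam.rowLen r with hfdef
  have hrow_pos : ∀ r, r ≤ r2 → 1 ≤ lam.rowLen r := by
    intro r hr
    have := lam.rowLen_anti r r2 hr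
    omega
  have hfr2 : (f r2 : ℤ) = j - n + 1 + r2 := by
    simp only [hfdef, if_neg (by omega : ¬ r2 < r1), if_neg (lt_irrefl r2),
      eq_self_iff_true, if_true]
    omega
  have hfmid : ∀ r, r1 ≤ r → r < r2 → f r = lam.rowLen (r + 1) - 1 := by
    intro r ha hb
    simp only [hfdef, if_neg (by omega : ¬ r < r1), if_pos hb]
  have hfout1 : ∀ r, r < r1 → f r = lam.rowLen r := by
    intro r hr; simp only [hfdef, if_pos hr]
  have hfout2 : ∀ r, r2 < r → f r = lam.rowLen r := by
    intro r hr
    simp only [hfdef, if_neg (by omega : ¬ r < r1), if_neg (by omega : ¬ r < r2),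
      if_neg (by omega : ¬ r = r2)]
  have hfle : ∀ r, f r ≤ lam.rowLen r := by
    intro r
    rcases lt_or_ge r r1 with hc | hc
    · rw [hfout1 r hc]
    · rcases lt_or_ge r r2 with hc2 | hc2
      · rw [hfmid r hc hc2]
        have := lam.rowLen_anti r (r+1) (by omega)
        omega
      · rcases eq_or_lt_of_le hc2 with he | hlt
        · have : (f r : ℤ) ≤ (lam.rowLen r : ℤ) := by
            rw [← he, hfr2, hZ r2]
            omega
          exact_mod_cast this
        · rw [hfout2 r hlt]
  have hfstrict : ∀ r, r1 ≤ r → r ≤ r2 → f r < lam.rowLen r := by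
    intro r ha hb
    rcases lt_or_ge r r2 with hc | hc
    · rw [hfmid r ha hc]
      have h3 := lam.rowLen_anti r (r+1) (by omega)
      have h4 := hrow_pos (r+1) (by omega)
      omega
    · have he : r = r2 := by omega
      have : (f r : ℤ) < (lam.rowLen r : ℤ) := by
        rw [he, hfr2, hZ r2]
        omega
      exact_mod_cast this
  have hanti : ∀ r, f (r + 1) ≤ f r := by
    intro r
    rcases lt_or_ge (r + 1) r1 with hc | hc
    · rw [hfout1 (r+1) hc, hfout1 r (by omega)]
      exact lam.rowLen_anti r (r+1) (by omega)
    · rcases eq_or_lt_of_le hc with he | hlt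
      · -- r + 1 = r1
        rw [hfout1 r (by omega)]
        calc f (r+1) ≤ lam.rowLen (r+1) := hfle (r+1)
        _ ≤ lam.rowLen r := lam.rowLen_anti r (r+1) (by omega)
      · -- r1 ≤ r
        have har : r1 ≤ r := by omega
        rcases lt_or_ge (r + 1) r2 with hc2 | hc2
        · rw [hfmid (r+1) (by omega) hc2, hfmid r har (by omega)]
          have := lam.rowLen_anti (r+1) (r+1+1) (by omega)
          omega
        · rcases eq_or_lt_of_le hc2 with he2 | hlt2
          · -- r + 1 = r2
            have : (f (r+1) : ℤ) ≤ (f r : ℤ) := by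
              rw [he2] at hfr2 hr2a
              rw [hfr2, hfmid r har (by omega)]
              have h3 := hrow_pos (r+1) (by omega)
              have h4 := hZ (r+1)
              push_cast [Nat.cast_sub h3]
              omega
            exact_mod_cast this
          · -- r2 < r + 1, i.e. r2 ≤ r
            rcases eq_or_lt_of_le (show r2 ≤ r by omega) with he3 | hlt3
            · -- r = r2
              subst he3
              have : (f (r2+1) : ℤ) ≤ (f r2 : ℤ) := by
                rw [hfr2, hfout2 (r2+1) (by omega), hZ (r2+1)]
                omega
              exact_mod_cast this
            · rw [hfout2 (r+1) (by omega), hfout2 r hlt3]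
              exact lam.rowLen_anti r (r+1) (by omega)
  have hNz : ∀ r, r2 + 1 + lam.colLen 0 ≤ r → f r = 0 := by
    intro r hr
    rw [hfout2 r (by omega)]
    exact rowLen_zero_of_ge (by omega)
  refine ⟨ofRowFn f hanti _ hNz, r1, r2, h12, ?_, ?_, ?_, ?_, hr1, ?_⟩
  · intro r hr
    rw [rowLen_ofRowFn, hfout1 r hr]
  · intro r hr
    rw [rowLen_ofRowFn, hfout2 r hr]
  · intro r ha hb
    rw [rowLen_ofRowFn]
    exact hfstrict r ha hb
  · intro r ha hb
    rw [rowLen_ofRowFn, hfmid r ha hb]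
    have := hrow_pos (r+1) (by omega)
    omega
  · show sfun _ r2 = j - n
    unfold sfun
    rw [rowLen_ofRowFn, hfr2]
    ring

end ExistsRem

end RS
namespace RS

variable {lam mu nu : YoungDiagram} {i j : ℤ} {n : ℕ}

lemma add_sets (h : IsRibbon n lam mu i) :
    i - n ∈ Sset lam ∧ i ∉ Sset lam ∧ Sset mu = insert i (Sset lam \ {i - n}) :=
  rows_to_sets (rows_of_isRibbon h)

lemma rem_sets (h : IsRibbon n mu lam j) :
    j ∈ Sset lam ∧ j - n ∉ Sset lam ∧ Sset mu = insert (j - n) (Sset lam \ {j}) := by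
  obtain ⟨h1, h2, h3⟩ := rows_to_sets (rows_of_isRibbon h)
  refine ⟨h3 ▸ Set.mem_insert _ _, ?_, ?_⟩
  · rw [h3]
    intro hx
    rcases Set.mem_insert_iff.mp hx with he | hx2
    · rw [he] at h1; exact h2 h1
    · exact hx2.2 rfl
  · rw [h3]
    ext x
    simp only [Set.mem_insert_iff, Set.mem_diff, Set.mem_singleton_iff]
    constructor
    · intro hx
      by_cases he : x = j - n
      · exact Or.inl he
      · exact Or.inr ⟨Or.inr ⟨hx, he⟩, fun hj => h2 (hj ▸ hx)⟩
    · rintro (rfl | ⟨(rfl | ⟨hx, hne⟩), hxj⟩)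
      · exact h1
      · exact absurd rfl hxj
      · exact hx

lemma add_unique (h1 : IsRibbon n lam mu i) (h2 : IsRibbon n lam nu i) : mu = nu :=
  Sset_injective (by rw [(add_sets h1).2.2, (add_sets h2).2.2])

lemma rem_unique (h1 : IsRibbon n mu lam j) (h2 : IsRibbon n nu lam j) : mu = nu :=
  Sset_injective (by rw [(rem_sets h1).2.2, (rem_sets h2).2.2])

lemma exists_add_iff :
    (∃ mu, IsRibbon n lam mu i) ↔ (i - n ∈ Sset lam ∧ i ∉ Sset lam) := by
  constructor
  · rintro ⟨mu, hmu⟩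
    exact ⟨(add_sets hmu).1, (add_sets hmu).2.1⟩
  · rintro ⟨h1, h2⟩
    obtain ⟨mu, hmu⟩ := exists_add h1 h2
    exact ⟨mu, isRibbon_of_rows hmu⟩

lemma exists_rem_iff :
    (∃ mu, IsRibbon n mu lam j) ↔ (j ∈ Sset lam ∧ j - n ∉ Sset lam) := by
  constructor
  · rintro ⟨mu, hmu⟩
    exact ⟨(rem_sets hmu).1, (rem_sets hmu).2.1⟩
  · rintro ⟨h1, h2⟩
    obtain ⟨mu, hmu⟩ := exists_rem h1 h2
    exact ⟨mu, isRibbon_of_rows hmu⟩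

lemma uVec_eq (h : IsRibbon n lam mu i) :
    uVec n i lam = q ^ spin lam mu • Finsupp.single mu 1 := by
  unfold uVec
  have hex : ∃ nu, IsRibbon n lam nu i := ⟨mu, h⟩
  rw [dif_pos hex]
  have := add_unique (Classical.choose_spec hex) h
  rw [this]

lemma uVec_zero (h : ¬ ∃ mu, IsRibbon n lam mu i) : uVec n i lam = 0 := dif_neg h

lemma dVec_eq (h : IsRibbon n mu lam j) :
    dVec n j lam = q ^ spin mu lam • Finsupp.single mu 1 := by
  unfold dVec
  have hex : ∃ nu, IsRibbon n nu lam j := ⟨mu, h⟩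
  rw [dif_pos hex]
  have := rem_unique (Classical.choose_spec hex) h
  rw [this]

lemma dVec_zero (h : ¬ ∃ mu, IsRibbon n mu lam j) : dVec n j lam = 0 := dif_neg h

lemma u_single (c : K) : u n i (Finsupp.single lam c) = c • uVec n i lam := by
  unfold u
  rw [Finsupp.lsum_single, LinearMap.toSpanSingleton_apply]

lemma d_single (c : K) : d n j (Finsupp.single lam c) = c • dVec n j lam := by
  unfold d
  rw [Finsupp.lsum_single, LinearMap.toSpanSingleton_apply]

lemma cnt_congr {a b : YoungDiagram}
    (h : ∀ x, x ∈ Finset.Ioo (i - (n : ℤ)) i → (x ∈ Sset a ↔ x ∈ Sset b)) :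
    cnt n i a = cnt n i b := by
  unfold cnt
  congr 1
  exact Finset.filter_congr h

lemma cnt_move {a c : ℤ} (hset : Sset mu = insert a (Sset lam \ {c}))
    (ha : a ∉ Sset lam) (hc : c ∈ Sset lam) :
    cnt n i mu + (if c ∈ Finset.Ioo (i - (n : ℤ)) i then 1 else 0)
      = cnt n i lam + (if a ∈ Finset.Ioo (i - (n : ℤ)) i then 1 else 0) := by
  classical
  unfold cnt
  set t := Finset.Ioo (i - (n : ℤ)) i with ht
  set b := t.filter (fun s => s ∈ Sset lam) with hb
  have hanotb : a ∉ b := fun hmem => ha (Finset.mem_filter.mp hmem).2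
  have hfe : (t.filter (fun s => s ∈ Sset mu)) =
      if a ∈ t then insert a (b.erase c) else b.erase c := by
    ext x
    by_cases hat : a ∈ t <;>
      simp only [hat, if_true, if_false, Finset.mem_filter, Finset.mem_insert, Finset.mem_erase,
        hset, Set.mem_insert_iff, Set.mem_diff, Set.mem_singleton_iff, hb]
    · constructor
      · rintro ⟨hxt, rfl | ⟨hxS, hxc⟩⟩
        · exact Or.inl rfl
        · exact Or.inr ⟨hxc, hxt, hxS⟩
      · rintro (rfl | ⟨hxc, hxt, hxS⟩)
        · exact ⟨hat, Or.inl rfl⟩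
        · exact ⟨hxt, Or.inr ⟨hxS, hxc⟩⟩
    · constructor
      · rintro ⟨hxt, rfl | ⟨hxS, hxc⟩⟩
        · exact absurd hxt hat
        · exact ⟨hxc, hxt, hxS⟩
      · rintro ⟨hxc, hxt, hxS⟩
        exact ⟨hxt, Or.inr ⟨hxS, hxc⟩⟩
  rw [hfe]
  by_cases hat : a ∈ t <;> by_cases hct : c ∈ t <;>
    simp only [hat, hct, if_true, if_false]
  · rw [Finset.card_insert_of_notMem (fun hmem => hanotb (Finset.mem_of_mem_erase hmem)),
      Finset.card_erase_of_mem (Finset.mem_filter.mpr ⟨hct, hc⟩)]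
    have hpos : 0 < b.card := Finset.card_pos.mpr ⟨c, Finset.mem_filter.mpr ⟨hct, hc⟩⟩
    have hbeq : b = t.filter (fun s => s ∈ Sset lam) := rfl
    rw [← hbeq]
    omega
  · rw [Finset.card_insert_of_notMem (fun hmem => hanotb (Finset.mem_of_mem_erase hmem)),
      Finset.erase_eq_of_notMem (fun hmem => hct (Finset.mem_filter.mp hmem).1)]
  · rw [Finset.card_erase_of_mem (Finset.mem_filter.mpr ⟨hct, hc⟩)]
    have hpos : 0 < b.card := Finset.card_pos.mpr ⟨c, Finset.mem_filter.mpr ⟨hct, hc⟩⟩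
    have hbeq : b = t.filter (fun s => s ∈ Sset lam) := rfl
    rw [← hbeq]
    omega
  · rw [Finset.erase_eq_of_notMem (fun hmem => hct (Finset.mem_filter.mp hmem).1)]

end RS
open RS in
/-- `u_i d_j = d_j u_i` for `i ≠ j`. -/
theorem u_d_commute (n : ℕ) (hn : 1 ≤ n) (i j : ℤ) (hij : i ≠ j) :
    u n i * d n j = d n j * u n i := by
  apply Finsupp.lhom_ext
  intro lam c
  simp only [Module.End.mul_apply]
  rw [d_single, u_single, map_smul, map_smul]
  congr 1
  by_cases hAll : (j ∈ Sset lam ∧ j - n ∉ Sset lam) ∧ (i - n ∈ Sset lam ∧ i ∉ Sset lam)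
      ∧ i - n ≠ j ∧ j - n ≠ i
  · obtain ⟨⟨hA, hB⟩, ⟨hC, hD⟩, hE, hG⟩ := hAll
    have hEn : i - (n : ℤ) ≠ j - n := fun h => hij (by omega)
    obtain ⟨mu, hmuR⟩ := exists_rem hA hB
    have hmu : IsRibbon n mu lam j := isRibbon_of_rows hmuR
    obtain ⟨-, -, hSmu⟩ := rem_sets hmu
    obtain ⟨rho, hrhoR⟩ := exists_add hC hD
    have hrho : IsRibbon n lam rho i := isRibbon_of_rows hrhoR
    obtain ⟨-, -, hSrho⟩ := add_sets hrho
    have hCmu : i - (n : ℤ) ∈ Sset mu := by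
      rw [hSmu]
      simp only [Set.mem_insert_iff, Set.mem_diff, Set.mem_singleton_iff]
      exact Or.inr ⟨hC, hE⟩
    have hDmu : i ∉ Sset mu := by
      rw [hSmu]
      simp only [Set.mem_insert_iff, Set.mem_diff, Set.mem_singleton_iff]
      rintro (he | ⟨hmem, -⟩)
      · exact hG he.symm
      · exact hD hmem
    obtain ⟨nuR, hnuR⟩ := exists_add hCmu hDmu
    have hnu : IsRibbon n mu nuR i := isRibbon_of_rows hnuR
    obtain ⟨-, -, hSnu⟩ := add_sets hnu
    have hArho : j ∈ Sset rho := by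
      rw [hSrho]
      simp only [Set.mem_insert_iff, Set.mem_diff, Set.mem_singleton_iff]
      exact Or.inr ⟨hA, fun he => hE he.symm⟩
    have hBrho : j - (n : ℤ) ∉ Sset rho := by
      rw [hSrho]
      simp only [Set.mem_insert_iff, Set.mem_diff, Set.mem_singleton_iff]
      rintro (he | ⟨hmem, -⟩)
      · exact hG he
      · exact hB hmem
    obtain ⟨sigma, hsigmaR⟩ := exists_rem hArho hBrho
    have hsigma : IsRibbon n sigma rho j := isRibbon_of_rows hsigmaR
    obtain ⟨-, -, hSsigma⟩ := rem_sets hsigma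
    have hsnu : sigma = nuR := by
      apply Sset_injective
      rw [hSsigma, hSrho, hSnu, hSmu]
      ext x
      simp only [Set.mem_insert_iff, Set.mem_diff, Set.mem_singleton_iff]
      constructor
      · rintro (rfl | ⟨(rfl | ⟨hx, hxne⟩), hxj⟩)
        · exact Or.inr ⟨Or.inl rfl, hEn.symm⟩
        · exact Or.inl rfl
        · exact Or.inr ⟨Or.inr ⟨hx, hxj⟩, hxne⟩
      · rintro (rfl | ⟨(rfl | ⟨hx, hxne⟩), hxj⟩)
        · exact Or.inr ⟨Or.inl rfl, fun he => hij (by omega)⟩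
        · exact Or.inl rfl
        · exact Or.inr ⟨Or.inr ⟨hx, hxj⟩, hxne⟩
    -- spin bookkeeping
    have s1 : spin mu lam = cnt n j lam := by
      rw [rows_spin hmuR]
      apply cnt_congr
      intro x hx
      rw [hSmu]
      simp only [Finset.mem_Ioo] at hx
      simp only [Set.mem_insert_iff, Set.mem_diff, Set.mem_singleton_iff]
      constructor
      · rintro (rfl | ⟨hxS, -⟩)
        · exact absurd hx.1 (lt_irrefl _)
        · exact hxS
      · intro hxS
        exact Or.inr ⟨hxS, by omega⟩
    have s2 : spin mu nuR = cnt n i mu := rows_spin hnuR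
    have s3 : spin lam rho = cnt n i lam := rows_spin hrhoR
    have s4 : spin sigma rho = cnt n j rho := by
      rw [rows_spin hsigmaR]
      apply cnt_congr
      intro x hx
      rw [hSsigma]
      simp only [Finset.mem_Ioo] at hx
      simp only [Set.mem_insert_iff, Set.mem_diff, Set.mem_singleton_iff]
      constructor
      · rintro (rfl | ⟨hxS, -⟩)
        · exact absurd hx.1 (lt_irrefl _)
        · exact hxS
      · intro hxS
        exact Or.inr ⟨hxS, by omega⟩
    have m1 := cnt_move (n := n) (i := i) hSmu hB hA
    have m2 := cnt_move (n := n) (i := j) hSrho hD hC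
    have e1 : (if j ∈ Finset.Ioo (i - (n : ℤ)) i then 1 else 0)
        = (if (i - (n : ℤ)) ∈ Finset.Ioo (j - (n : ℤ)) j then (1 : ℕ) else 0) := by
      have hiff : (j ∈ Finset.Ioo (i - (n : ℤ)) i) ↔ ((i - (n : ℤ)) ∈ Finset.Ioo (j - (n : ℤ)) j) := by
        simp only [Finset.mem_Ioo]
        constructor <;> intro hw <;> omega
      by_cases hw : j ∈ Finset.Ioo (i - (n : ℤ)) i
      · rw [if_pos hw, if_pos (hiff.mp hw)]
      · rw [if_neg hw, if_neg (fun hc => hw (hiff.mpr hc))]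
    have e2 : (if (j - (n : ℤ)) ∈ Finset.Ioo (i - (n : ℤ)) i then (1 : ℕ) else 0)
        = (if i ∈ Finset.Ioo (j - (n : ℤ)) j then 1 else 0) := by
      have hiff : ((j - (n : ℤ)) ∈ Finset.Ioo (i - (n : ℤ)) i) ↔ (i ∈ Finset.Ioo (j - (n : ℤ)) j) := by
        simp only [Finset.mem_Ioo]
        constructor <;> intro hw <;> omega
      by_cases hw : (j - (n : ℤ)) ∈ Finset.Ioo (i - (n : ℤ)) i
      · rw [if_pos hw, if_pos (hiff.mp hw)]
      · rw [if_neg hw, if_neg (fun hc => hw (hiff.mpr hc))]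
    have hexp : spin mu lam + spin mu nuR = spin lam rho + spin sigma rho := by
      rw [s1, s2, s3, s4]
      omega
    rw [dVec_eq hmu, map_smul, u_single, uVec_eq hnu,
      uVec_eq hrho, map_smul, d_single, dVec_eq hsigma, hsnu]
    rw [hsnu] at hexp
    simp only [one_smul, one_mul, smul_smul, ← pow_add]
    rw [hexp]
  · -- both sides vanish
    have hL : u n i (dVec n j lam) = 0 := by
      by_cases hd : ∃ mu, IsRibbon n mu lam j
      · obtain ⟨mu, hmu⟩ := hd
        obtain ⟨hA, hB, hSmu⟩ := rem_sets hmu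
        rw [dVec_eq hmu, map_smul, u_single]
        have hz : uVec n i mu = 0 := by
          apply uVec_zero
          rintro ⟨nuR, hnu⟩
          obtain ⟨hCmu, hDmu, -⟩ := add_sets hnu
          rw [hSmu] at hCmu hDmu
          simp only [Set.mem_insert_iff, Set.mem_diff, Set.mem_singleton_iff] at hCmu hDmu
          push_neg at hDmu
          apply hAll
          rcases hCmu with he | ⟨hC, hE⟩
          · exact absurd (by omega : i = j) hij
          · have hD : i ∉ Sset lam := fun hm => hij (hDmu.2 hm)
            exact ⟨⟨hA, hB⟩, ⟨hC, hD⟩, hE, fun hc => hDmu.1 hc.symm⟩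
        rw [hz, smul_zero, smul_zero]
      · rw [dVec_zero hd, map_zero]
    have hR : d n j (uVec n i lam) = 0 := by
      by_cases hu : ∃ rho, IsRibbon n lam rho i
      · obtain ⟨rho, hrho⟩ := hu
        obtain ⟨hC, hD, hSrho⟩ := add_sets hrho
        rw [uVec_eq hrho, map_smul, d_single]
        have hz : dVec n j rho = 0 := by
          apply dVec_zero
          rintro ⟨sigma, hsigma⟩
          obtain ⟨hArho, hBrho, -⟩ := rem_sets hsigma
          rw [hSrho] at hArho hBrho
          simp only [Set.mem_insert_iff, Set.mem_diff, Set.mem_singleton_iff] at hArho hBrho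
          push_neg at hBrho
          apply hAll
          rcases hArho with he | ⟨hA, hEs⟩
          · exact absurd he.symm hij
          · have hB : j - (n : ℤ) ∉ Sset lam := fun hm => hij (by
              have := hBrho.2 hm
              omega)
            exact ⟨⟨hA, hB⟩, ⟨hC, hD⟩, fun hc => hEs hc.symm, hBrho.1⟩
        rw [hz, smul_zero, smul_zero]
      · rw [uVec_zero hu, map_zero]
    rw [hL, hR]
end RibbonSchur
end

section
/- (Van Leeuwen's lemma) Let λ be a partition and suppose n-ribbons R_i and R_j can each be added to or removed from λ with heads on diagonals i < j, with no addable or removable ribbon on any diagonal strictly between i and j. Then exactly one of the following holds: both are addable and spin(R_j) = spin(R_i) - 1; both are removable and spin(R_j) = spin(R_i) + 1; one is addable and the other removable and spin(R_j) = spin(R_i). -/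
open scoped Classical

noncomputable section RibbonSchur

/-- The beta sequence (Maya diagram positions) of a partition. -/
def beta (lam : YoungDiagram) (k : ℕ) : ℤ := (lam.rowLen k : ℤ) - k

/-- x is a bead of lam. -/
def Bead (lam : YoungDiagram) (x : ℤ) : Prop := ∃ k, beta lam k = x

theorem beta_strictAnti (lam : YoungDiagram) : StrictAnti (beta lam) := by
  apply strictAnti_nat_of_succ_lt
  intro k
  have h := lam.rowLen_anti k (k+1) (Nat.le_succ k)
  unfold beta
  push_cast
  omega

theorem beta_le_of_le (lam : YoungDiagram) {k l : ℕ} (h : k ≤ l) : beta lam l ≤ beta lam k :=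
  (beta_strictAnti lam).antitone h

theorem beta_neg (lam : YoungDiagram) {k : ℕ} (h : lam.rowLen k = 0) : beta lam k = -k := by
  simp [beta, h]

theorem rowLen_eventually_zero (lam : YoungDiagram) : ∃ N, ∀ k, N ≤ k → lam.rowLen k = 0 := by
  refine ⟨lam.colLen 0, fun k hk => ?_⟩
  by_contra h
  have : (k, 0) ∈ lam := by
    rw [YoungDiagram.mem_iff_lt_rowLen]; omega
  rw [YoungDiagram.mem_iff_lt_colLen] at this
  omega

theorem beta_lt_of_large (lam : YoungDiagram) (x : ℤ) : ∃ N : ℕ, ∀ k, N ≤ k → beta lam k < x := by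
  obtain ⟨N, hN⟩ := rowLen_eventually_zero lam
  obtain ⟨M, hM⟩ := exists_nat_gt (-x)
  refine ⟨max N (M+1), fun k hk => ?_⟩
  have h1 : lam.rowLen k = 0 := hN k (le_trans (le_max_left _ _) hk)
  have h2 : (M:ℤ) < k := by exact_mod_cast lt_of_lt_of_le (by omega : M < max N (M+1)) (by exact_mod_cast hk)
  rw [beta_neg lam h1]
  omega

/-- rowLen from a membership characterization. -/
theorem rowLen_eq_of_iff {mu : YoungDiagram} {i m : ℕ} (h : ∀ j, (i, j) ∈ mu ↔ j < m) :
    mu.rowLen i = m := by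
  rcases Nat.lt_trichotomy (mu.rowLen i) m with hlt | he | hgt
  · have := (h (mu.rowLen i)).mpr hlt
    rw [YoungDiagram.mem_iff_lt_rowLen] at this; omega
  · exact he
  · have : (i, m) ∈ mu := by rw [YoungDiagram.mem_iff_lt_rowLen]; omega
    rw [h m] at this; omega

theorem le_of_rowLen_le {lam mu : YoungDiagram} (h : ∀ k, lam.rowLen k ≤ mu.rowLen k) :
    lam ≤ mu := by
  rw [← YoungDiagram.cells_subset_iff]
  intro c hc
  obtain ⟨i, j⟩ := c
  rw [YoungDiagram.mem_cells, YoungDiagram.mem_iff_lt_rowLen] at hc ⊢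
  exact lt_of_lt_of_le hc (h i)

/-- Build a Young diagram from an antitone, eventually-zero row length function. -/
def ofFn (g : ℕ → ℕ) (hg : ∀ k, g (k+1) ≤ g k) (N : ℕ) (hN : ∀ k, N ≤ k → g k = 0) :
    YoungDiagram where
  cells := (Finset.range N ×ˢ Finset.range (g 0 + 1)).filter (fun p => p.2 < g p.1)
  isLowerSet := by
    rintro ⟨i1, j1⟩ ⟨i2, j2⟩ ⟨(hi : i2 ≤ i1), (hj : j2 ≤ j1)⟩ hm
    have hanti : ∀ a b : ℕ, a ≤ b → g b ≤ g a := fun a b hab => antitone_nat_of_succ_le hg hab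
    simp only [Finset.coe_filter, Finset.mem_coe, Finset.mem_product, Finset.mem_range,
      Set.mem_setOf_eq] at hm ⊢
    obtain ⟨⟨h1, h2⟩, h3⟩ := hm
    have hle : g i1 ≤ g i2 := hanti _ _ hi
    have hi2N : i2 < N := by
      by_contra hc
      have : g i2 = 0 := hN i2 (by omega)
      omega
    refine ⟨⟨hi2N, ?_⟩, by omega⟩
    have : g i2 ≤ g 0 := hanti 0 i2 (Nat.zero_le _)
    omega

theorem mem_ofFn (g : ℕ → ℕ) (hg : ∀ k, g (k+1) ≤ g k) (N : ℕ) (hN : ∀ k, N ≤ k → g k = 0)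
    (i j : ℕ) : (i, j) ∈ ofFn g hg N hN ↔ j < g i := by
  have hanti : ∀ a b : ℕ, a ≤ b → g b ≤ g a := fun a b hab => antitone_nat_of_succ_le hg hab
  constructor
  · intro h
    change (i, j) ∈ (Finset.range N ×ˢ Finset.range (g 0 + 1)).filter (fun p => p.2 < g p.1) at h
    exact (Finset.mem_filter.mp h).2
  · intro h
    show (i, j) ∈ (Finset.range N ×ˢ Finset.range (g 0 + 1)).filter (fun p => p.2 < g p.1)
    simp only [Finset.mem_filter, Finset.mem_product, Finset.mem_range]
    have hiN : i < N := by
      by_contra hc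
      have : g i = 0 := hN i (by omega)
      omega
    have : g i ≤ g 0 := hanti 0 i (Nat.zero_le _)
    exact ⟨⟨hiN, by omega⟩, h⟩

theorem rowLen_ofFn (g : ℕ → ℕ) (hg : ∀ k, g (k+1) ≤ g k) (N : ℕ) (hN : ∀ k, N ≤ k → g k = 0)
    (i : ℕ) : (ofFn g hg N hN).rowLen i = g i :=
  rowLen_eq_of_iff (fun j => mem_ofFn g hg N hN i j)


theorem exists_beta_le (lam : YoungDiagram) (e : ℤ) : ∃ k, beta lam k ≤ e := by
  obtain ⟨N, hN⟩ := beta_lt_of_large lam e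
  exact ⟨N, (hN N le_rfl).le⟩

/-- Least row whose beta value is at most `e`. -/
def rowOf (lam : YoungDiagram) (e : ℤ) : ℕ := Nat.find (exists_beta_le lam e)

theorem beta_rowOf_le (lam : YoungDiagram) (e : ℤ) : beta lam (rowOf lam e) ≤ e :=
  Nat.find_spec (exists_beta_le lam e)

theorem lt_beta_of_lt_rowOf (lam : YoungDiagram) (e : ℤ) {k : ℕ} (h : k < rowOf lam e) :
    e < beta lam k := by
  have := Nat.find_min (exists_beta_le lam e) h
  omega

theorem rowOf_le (lam : YoungDiagram) (e : ℤ) {k : ℕ} (h : beta lam k ≤ e) :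
    rowOf lam e ≤ k := Nat.find_min' (exists_beta_le lam e) h

theorem rowOf_antitone (lam : YoungDiagram) {e e' : ℤ} (h : e ≤ e') :
    rowOf lam e' ≤ rowOf lam e :=
  rowOf_le lam e' (le_trans (beta_rowOf_le lam e) h)

theorem rowOf_succ_bound (lam : YoungDiagram) (e : ℤ) :
    rowOf lam e ≤ rowOf lam (e+1) + 1 := by
  apply rowOf_le
  have h1 : beta lam (rowOf lam (e+1)) ≤ e + 1 := beta_rowOf_le lam (e+1)
  have h2 : beta lam (rowOf lam (e+1) + 1) < beta lam (rowOf lam (e+1)) :=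
    (beta_strictAnti lam) (Nat.lt_succ_self _)
  omega

theorem neg_le_beta (lam : YoungDiagram) (k : ℕ) : -(k:ℤ) ≤ beta lam k := by
  unfold beta
  have : (0:ℤ) ≤ (lam.rowLen k : ℤ) := Int.natCast_nonneg _
  omega

/-- The cell on diagonal `e` just outside the boundary of `lam`. -/
def cellAt (lam : YoungDiagram) (e : ℤ) : ℕ × ℕ :=
  (rowOf lam e, (e + rowOf lam e).toNat)

theorem cellAt_col (lam : YoungDiagram) (e : ℤ) :
    ((cellAt lam e).2 : ℤ) = e + rowOf lam e := by
  have h1 : beta lam (rowOf lam e) ≤ e := beta_rowOf_le lam e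
  have h2 := neg_le_beta lam (rowOf lam e)
  simp only [cellAt]
  omega

theorem cellAt_content (lam : YoungDiagram) (e : ℤ) :
    ((cellAt lam e).2 : ℤ) - (cellAt lam e).1 = e := by
  have := cellAt_col lam e
  simp only [cellAt] at *
  omega

theorem cellAdj_symm {a b : ℕ × ℕ} (h : CellAdj a b) : CellAdj b a := by
  unfold CellAdj at *; tauto

theorem rowLen_mono {lam mu : YoungDiagram} (h : lam ≤ mu) (k : ℕ) :
    lam.rowLen k ≤ mu.rowLen k := by
  by_contra hc
  have h1 : (k, mu.rowLen k) ∈ lam := by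
    rw [YoungDiagram.mem_iff_lt_rowLen]; omega
  have h2 : (k, mu.rowLen k) ∈ mu := h h1
  rw [YoungDiagram.mem_iff_lt_rowLen] at h2
  omega

theorem skew_mem_iff {lam mu : YoungDiagram} (k c : ℕ) :
    (k, c) ∈ skewCells lam mu ↔ (c < mu.rowLen k ∧ lam.rowLen k ≤ c) := by
  unfold skewCells
  rw [Finset.mem_sdiff, YoungDiagram.mem_cells, YoungDiagram.mem_cells,
    YoungDiagram.mem_iff_lt_rowLen, YoungDiagram.mem_iff_lt_rowLen]
  omega

theorem isRibbon_of_data (n : ℕ) (hn : 1 ≤ n) (lam mu : YoungDiagram) (d : ℤ) (r r' : ℕ)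
    (hrr : r ≤ r')
    (hlow : ∀ k, k < r → mu.rowLen k = lam.rowLen k)
    (hhigh : ∀ k, r' < k → mu.rowLen k = lam.rowLen k)
    (hmid : ∀ k, r ≤ k → k < r' → beta mu (k+1) = beta lam k)
    (hhead : beta mu r = d + 1)
    (htail : beta lam r' = d + 1 - n)
    (hle : lam ≤ mu) : IsRibbon n lam mu d := by
  have hbmu := beta_strictAnti mu
  have hbla := beta_strictAnti lam
  have hout : ∀ k, (k < r ∨ r' < k) → beta mu k = beta lam k := by
    intro k hk
    unfold beta
    rcases hk with hk | hk
    · rw [hlow k hk]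
    · rw [hhigh k hk]
  have hne : ∀ k, r ≤ k → k ≤ r' → beta lam k < beta mu k := by
    intro k h1 h2
    rcases Nat.lt_or_ge r k with hk | hk
    · have := hmid (k-1) (by omega) (by omega)
      have hk1 : k - 1 + 1 = k := by omega
      rw [hk1] at this
      rw [this]
      exact hbla (by omega)
    · have hkr : k = r := by omega
      subst hkr
      rcases Nat.lt_or_ge k r' with h3 | h3
      · have := hmid k le_rfl h3
        have h4 : beta mu (k+1) < beta mu k := hbmu (Nat.lt_succ_self _)
        omega
      · have : k = r' := by omega
        subst this
        omega
  have hS : ∀ k c : ℕ, ((k, c) ∈ skewCells lam mu ↔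
      (r ≤ k ∧ k ≤ r' ∧ lam.rowLen k ≤ c ∧ c < mu.rowLen k)) := by
    intro k c
    rw [skew_mem_iff]
    constructor
    · rintro ⟨h1, h2⟩
      refine ⟨?_, ?_, h2, h1⟩ <;>
      · by_contra hc
        have := hlow k
        have := hhigh k
        omega
    · rintro ⟨_, _, h3, h4⟩
      exact ⟨h4, h3⟩
  have hrow : ∀ e : ℤ, d + 1 - n ≤ e → e ≤ d →
      (r ≤ rowOf lam e ∧ rowOf lam e ≤ r' ∧ e < beta mu (rowOf lam e)) := by
    intro e he1 he2
    have h2 : rowOf lam e ≤ r' := rowOf_le lam e (by omega)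
    have h1 : r ≤ rowOf lam e := by
      by_contra hc
      have h3 : beta lam (rowOf lam e) ≤ e := beta_rowOf_le lam e
      have h4 : beta mu (rowOf lam e) = beta lam (rowOf lam e) := hout _ (by omega)
      have h5 : beta mu r ≤ beta mu (rowOf lam e) := hbmu.antitone (by omega)
      omega
    refine ⟨h1, h2, ?_⟩
    rcases Nat.lt_or_ge r (rowOf lam e) with hk | hk
    · have h6 := hmid (rowOf lam e - 1) (by omega) (by omega)
      have hk1 : rowOf lam e - 1 + 1 = rowOf lam e := by omega
      rw [hk1] at h6
      have h7 : e < beta lam (rowOf lam e - 1) := lt_beta_of_lt_rowOf lam e (by omega)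
      omega
    · have : rowOf lam e = r := by omega
      rw [this, hhead]
      omega
  have hcm : ∀ e : ℤ, d + 1 - n ≤ e → e ≤ d → cellAt lam e ∈ skewCells lam mu := by
    intro e he1 he2
    obtain ⟨h1, h2, h3⟩ := hrow e he1 he2
    have h4 : beta lam (rowOf lam e) ≤ e := beta_rowOf_le lam e
    have h5 := cellAt_col lam e
    show ((cellAt lam e).1, (cellAt lam e).2) ∈ skewCells lam mu
    rw [hS]
    have h6 : (cellAt lam e).1 = rowOf lam e := rfl
    rw [h6]
    refine ⟨h1, h2, ?_, ?_⟩
    · have : beta lam (rowOf lam e) = (lam.rowLen (rowOf lam e) : ℤ) - rowOf lam e := rfl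
      omega
    · have : beta mu (rowOf lam e) = (mu.rowLen (rowOf lam e) : ℤ) - rowOf lam e := rfl
      omega
  have huniq : ∀ p ∈ skewCells lam mu,
      (d + 1 - n ≤ (p.2:ℤ) - p.1 ∧ (p.2:ℤ) - p.1 ≤ d ∧ p = cellAt lam ((p.2:ℤ) - p.1)) := by
    rintro ⟨k, c⟩ hp
    rw [hS] at hp
    obtain ⟨h1, h2, h3, h4⟩ := hp
    have hbk : beta lam k = (lam.rowLen k : ℤ) - k := rfl
    have hbmk : beta mu k = (mu.rowLen k : ℤ) - k := rfl
    set e : ℤ := (c:ℤ) - k with hedef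
    have he1 : beta lam k ≤ e := by omega
    have he2 : e < beta mu k := by omega
    have hlo : d + 1 - n ≤ e := by
      have : beta lam r' ≤ beta lam k := hbla.antitone h2
      omega
    have hhi : e ≤ d := by
      have : beta mu k ≤ beta mu r := hbmu.antitone h1
      omega
    have hro : rowOf lam e = k := by
      have ha : rowOf lam e ≤ k := rowOf_le lam e he1
      rcases Nat.lt_or_ge (rowOf lam e) k with hb | hb
      · exfalso
        have hc : beta lam (rowOf lam e) ≤ e := beta_rowOf_le lam e
        rcases Nat.lt_or_ge (rowOf lam e) r with hd | hd
        · have h5 : beta mu (rowOf lam e) = beta lam (rowOf lam e) := hout _ (by omega)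
          have h6 : beta mu r ≤ beta mu (rowOf lam e) := hbmu.antitone (by omega)
          omega
        · have h5 := hmid (rowOf lam e) hd (by omega)
          have h6 : beta mu k ≤ beta mu (rowOf lam e + 1) := hbmu.antitone (by omega)
          omega
      · omega
    refine ⟨hlo, hhi, ?_⟩
    have hcol := cellAt_col lam e
    have : cellAt lam e = (rowOf lam e, (cellAt lam e).2) := rfl
    rw [this, hro]
    have : c = (cellAt lam e).2 := by omega
    rw [← this]
  have hSeq : skewCells lam mu = (Finset.Icc (d + 1 - n) d).image (cellAt lam) := by
    apply Finset.ext
    intro p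
    rw [Finset.mem_image]
    constructor
    · intro hp
      obtain ⟨h1, h2, h3⟩ := huniq p hp
      exact ⟨(p.2:ℤ) - p.1, Finset.mem_Icc.mpr ⟨h1, h2⟩, h3.symm⟩
    · rintro ⟨e, he, rfl⟩
      rw [Finset.mem_Icc] at he
      exact hcm e he.1 he.2
  have hinj : ∀ e₁ ∈ Finset.Icc (d + 1 - n) d, ∀ e₂ ∈ Finset.Icc (d + 1 - n) d,
      cellAt lam e₁ = cellAt lam e₂ → e₁ = e₂ := by
    intro e₁ _ e₂ _ h
    have h1 := cellAt_content lam e₁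
    have h2 := cellAt_content lam e₂
    rw [h] at h1
    omega
  have hcard : (skewCells lam mu).card = n := by
    rw [hSeq, Finset.card_image_of_injOn hinj, Int.card_Icc]
    omega
  -- adjacency of consecutive content cells
  have hadj : ∀ e : ℤ, CellAdj (cellAt lam e) (cellAt lam (e+1)) := by
    intro e
    have h1 : rowOf lam (e+1) ≤ rowOf lam e := rowOf_antitone lam (by omega)
    have h2 : rowOf lam e ≤ rowOf lam (e+1) + 1 := rowOf_succ_bound lam e
    have hc1 := cellAt_col lam e
    have hc2 := cellAt_col lam (e+1)
    have hr1 : (cellAt lam e).1 = rowOf lam e := rfl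
    have hr2 : (cellAt lam (e+1)).1 = rowOf lam (e+1) := rfl
    rcases Nat.lt_or_ge (rowOf lam (e+1)) (rowOf lam e) with h | h
    · -- row decreases by one going up in content: same column
      right
      constructor
      · omega
      · omega
    · -- same row: column increases by one
      left
      constructor
      · omega
      · omega
  -- connectivity
  have hconn : ∀ a ∈ skewCells lam mu, ∀ b ∈ skewCells lam mu,
      Relation.ReflTransGen (fun x y => x ∈ skewCells lam mu ∧ y ∈ skewCells lam mu ∧
        CellAdj x y) a b := by
    have hpath : ∀ m : ℕ, ∀ e : ℤ, d + 1 - n ≤ e → e + m ≤ d →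
        Relation.ReflTransGen (fun x y => x ∈ skewCells lam mu ∧ y ∈ skewCells lam mu ∧
          CellAdj x y) (cellAt lam e) (cellAt lam (e + m)) := by
      intro m
      induction m with
      | zero => intro e _ _; simpa using Relation.ReflTransGen.refl
      | succ m ih =>
        intro e he1 he2
        have h1 := ih e he1 (by push_cast; push_cast at he2; omega)
        apply h1.tail
        refine ⟨hcm _ (by push_cast; omega) (by push_cast at he2 ⊢; omega),
          hcm _ (by push_cast; push_cast at he2; omega) (by push_cast at he2 ⊢; omega), ?_⟩
        have : e + (↑(m+1) : ℤ) = (e + m) + 1 := by push_cast; ring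
        rw [this]
        exact hadj _
    intro a ha b hb
    obtain ⟨ha1, ha2, ha3⟩ := huniq a ha
    obtain ⟨hb1, hb2, hb3⟩ := huniq b hb
    set ea := (a.2:ℤ) - a.1
    set eb := (b.2:ℤ) - b.1
    have hsym : Symmetric (fun x y => x ∈ skewCells lam mu ∧ y ∈ skewCells lam mu ∧
        CellAdj x y) := by
      intro x y ⟨h1, h2, h3⟩
      exact ⟨h2, h1, cellAdj_symm h3⟩
    rcases le_total ea eb with h | h
    · have := hpath (eb - ea).toNat ea ha1 (by omega)
      rw [ha3, hb3]
      convert this using 2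
      omega
    · have := hpath (ea - eb).toNat eb hb1 (by omega)
      rw [ha3, hb3]
      apply @Std.Symm.symm _ _ (@Relation.ReflTransGen.stdSymm _ _ ⟨fun a b h => hsym h⟩)
      convert this using 2
      omega
  -- no 2x2 square
  have h2x2 : ¬ ∃ x c : ℕ, (x, c) ∈ skewCells lam mu ∧ (x + 1, c) ∈ skewCells lam mu ∧
      (x, c + 1) ∈ skewCells lam mu ∧ (x + 1, c + 1) ∈ skewCells lam mu := by
    rintro ⟨x, c, h1, _, _, h4⟩
    obtain ⟨_, _, e1⟩ := huniq _ h1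
    obtain ⟨_, _, e4⟩ := huniq _ h4
    have : ((c:ℤ)) - x = ((c+1:ℕ):ℤ) - ((x+1:ℕ):ℤ) := by push_cast; ring
    simp only at e1 e4
    rw [← this] at e4
    have : (x, c) = (x+1, c+1) := by rw [e1, e4]
    simp at this
  -- assemble
  refine ⟨hle, hcard, hconn, h2x2, cellAt lam d, hcm d (by omega) le_rfl, ?_, ?_⟩
  · exact cellAt_content lam d
  · intro p' hp'
    obtain ⟨_, h2, _⟩ := huniq p' hp'
    rw [cellAt_content]
    exact h2

theorem cellAdj_content {x y : ℕ × ℕ} (h : CellAdj x y) :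
    (x.2:ℤ) - x.1 = ((y.2:ℤ) - y.1) + 1 ∨ (y.2:ℤ) - y.1 = ((x.2:ℤ) - x.1) + 1 := by
  unfold CellAdj at h
  rcases h with ⟨h1, h2 | h2⟩ | ⟨h1, h2 | h2⟩ <;> [left; right; right; left] <;> push_cast <;> omega

theorem ribbon_data (n : ℕ) (hn : 1 ≤ n) (lam mu : YoungDiagram) (d : ℤ)
    (h : IsRibbon n lam mu d) :
    ∃ r r' : ℕ, r ≤ r' ∧
      (∀ k, k < r → mu.rowLen k = lam.rowLen k) ∧
      (∀ k, r' < k → mu.rowLen k = lam.rowLen k) ∧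
      (∀ k, r ≤ k → k < r' → beta mu (k+1) = beta lam k) ∧
      beta mu r = d + 1 ∧
      beta lam r' = d + 1 - n ∧
      (∀ k, r ≤ k → k ≤ r' → beta lam k ≤ d ∧ d + 2 - n ≤ beta mu k ∧
        lam.rowLen k < mu.rowLen k) ∧
      spinZ lam mu = (r' : ℤ) - r := by
  obtain ⟨hle, hcard, hconn, h2x2, pmax, hpm, hpmc, hpmax⟩ := h
  have hbmu := beta_strictAnti mu
  have hbla := beta_strictAnti lam
  -- content injectivity
  have aux : ∀ a b x y : ℕ, (a,b) ∈ skewCells lam mu → (x,y) ∈ skewCells lam mu →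
      (b:ℤ) - a = (y:ℤ) - x → a < x → False := by
    intro a b x y h1 h2 hc hlt
    rw [skew_mem_iff] at h1 h2
    have m1 : mu.rowLen x ≤ mu.rowLen (a+1) := mu.rowLen_anti _ _ (by omega)
    have m2 : mu.rowLen x ≤ mu.rowLen a := mu.rowLen_anti _ _ (by omega)
    have m3 : lam.rowLen (a+1) ≤ lam.rowLen a := lam.rowLen_anti _ _ (by omega)
    apply h2x2
    refine ⟨a, b, ?_, ?_, ?_, ?_⟩ <;> rw [skew_mem_iff] <;> omega
  have hinj : ∀ p ∈ skewCells lam mu, ∀ q ∈ skewCells lam mu,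
      (p.2:ℤ) - p.1 = (q.2:ℤ) - q.1 → p = q := by
    rintro ⟨a, b⟩ hp ⟨x, y⟩ hq hc
    simp only at hc
    rcases Nat.lt_trichotomy a x with hl | he | hg
    · exact absurd (aux a b x y hp hq hc hl) (fun f => f)
    · subst he
      have : b = y := by omega
      subst this
      rfl
    · exact absurd (aux x y a b hq hp hc.symm hg) (fun f => f)
  have hmem_le : ∀ p ∈ skewCells lam mu, (p.2:ℤ) - p.1 ≤ d := by
    intro p hp
    have := hpmax p hp
    omega
  -- intermediate contents exist
  have hival : ∀ q ∈ skewCells lam mu, ∀ p, Relation.ReflTransGen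
      (fun x y => x ∈ skewCells lam mu ∧ y ∈ skewCells lam mu ∧ CellAdj x y) p q →
      ∀ m : ℤ, (p.2:ℤ) - p.1 ≤ m → m ≤ (q.2:ℤ) - q.1 →
      ∃ z ∈ skewCells lam mu, (z.2:ℤ) - z.1 = m := by
    intro q hq p hpath
    induction hpath using Relation.ReflTransGen.head_induction_on with
    | refl =>
      intro m h1 h2
      exact ⟨q, hq, by omega⟩
    | @head a c hstep htail ih =>
      intro m h1 h2
      obtain ⟨haS, hcS, hadj⟩ := hstep
      rcases eq_or_lt_of_le h1 with heq | hlt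
      · exact ⟨a, haS, heq⟩
      · apply ih
        · rcases cellAdj_content hadj with hh | hh <;> omega
        · exact h2
  -- the set of contents is an interval
  set cp : ℕ × ℕ → ℤ := fun p => (p.2:ℤ) - p.1 with hcp
  set T : Finset ℤ := (skewCells lam mu).image cp with hT
  have hTcard : T.card = n := by
    rw [hT, Finset.card_image_of_injOn, hcard]
    intro p hp q hq hpq
    exact hinj p hp q hq hpq
  have hTne : T.Nonempty := by
    rw [← Finset.card_pos, hTcard]; omega
  set m0 : ℤ := T.min' hTne with hm0
  have hm0T : m0 ∈ T := T.min'_mem hTne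
  have hm0d : m0 ≤ d := by
    obtain ⟨p, hp, hpc⟩ := Finset.mem_image.mp hm0T
    rw [← hpc]
    exact hmem_le p hp
  have hmem_ge : ∀ p ∈ skewCells lam mu, m0 ≤ (p.2:ℤ) - p.1 := by
    intro p hp
    exact T.min'_le _ (Finset.mem_image_of_mem cp hp)
  have hIccT : Finset.Icc m0 d ⊆ T := by
    intro e he
    rw [Finset.mem_Icc] at he
    obtain ⟨pm, hpm', hpmc'⟩ := Finset.mem_image.mp hm0T
    obtain ⟨z, hz, hzc⟩ := hival pmax hpm pm (hconn pm hpm' pmax hpm) e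
      (by have hh : (pm.2:ℤ) - pm.1 = m0 := hpmc'; omega) (by omega)
    exact Finset.mem_image.mpr ⟨z, hz, hzc⟩
  have hTIcc : T ⊆ Finset.Icc m0 d := by
    intro e he
    obtain ⟨p, hp, hpc⟩ := Finset.mem_image.mp he
    rw [Finset.mem_Icc, ← hpc]
    exact ⟨hmem_ge p hp, hmem_le p hp⟩
  have hTeq : T = Finset.Icc m0 d := le_antisymm hTIcc hIccT
  have hm0val : m0 = d + 1 - n := by
    have := hTcard
    rw [hTeq, Int.card_Icc] at this
    omega
  have hex : ∀ e : ℤ, d + 1 - n ≤ e → e ≤ d → ∃ p ∈ skewCells lam mu, (p.2:ℤ) - p.1 = e := by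
    intro e h1 h2
    have : e ∈ T := hIccT (Finset.mem_Icc.mpr ⟨by omega, h2⟩)
    obtain ⟨p, hp, hpc⟩ := Finset.mem_image.mp this
    exact ⟨p, hp, hpc⟩
  have hex' : ∀ e : ℤ, ∃ p : ℕ × ℕ, (d + 1 - n ≤ e ∧ e ≤ d) →
      (p ∈ skewCells lam mu ∧ (p.2:ℤ) - p.1 = e) := by
    intro e
    by_cases hc : d + 1 - n ≤ e ∧ e ≤ d
    · obtain ⟨p, hp1, hp2⟩ := hex e hc.1 hc.2
      exact ⟨p, fun _ => ⟨hp1, hp2⟩⟩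
    · exact ⟨(0,0), fun hcc => absurd hcc hc⟩
  choose f hf using hex'
  have hfS : ∀ e : ℤ, d + 1 - n ≤ e → e ≤ d → f e ∈ skewCells lam mu :=
    fun e h1 h2 => (hf e ⟨h1, h2⟩).1
  have hfc : ∀ e : ℤ, d + 1 - n ≤ e → e ≤ d → ((f e).2:ℤ) - (f e).1 = e :=
    fun e h1 h2 => (hf e ⟨h1, h2⟩).2
  have hfuniq : ∀ e : ℤ, d + 1 - n ≤ e → e ≤ d → ∀ p ∈ skewCells lam mu,
      (p.2:ℤ) - p.1 = e → p = f e := by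
    intro e h1 h2 p hp hpc
    exact hinj p hp (f e) (hfS e h1 h2) (by rw [hpc, hfc e h1 h2])
  -- row step
  have hstep : ∀ e : ℤ, d + 1 - n ≤ e → e < d →
      ((f (e+1)).1 = (f e).1 ∨ (f (e+1)).1 + 1 = (f e).1) := by
    intro e h1 h2
    rcases hq : f (e+1) with ⟨x, y⟩
    rcases hp : f e with ⟨a, b⟩
    have hpS := hfS e h1 (by omega); rw [hp] at hpS
    have hqS := hfS (e+1) (by omega) (by omega); rw [hq] at hqS
    have hpc := hfc e h1 (by omega); rw [hp] at hpc
    have hqc := hfc (e+1) (by omega) (by omega); rw [hq] at hqc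
    simp only at hpc hqc
    rw [skew_mem_iff] at hpS hqS
    rcases Nat.lt_or_ge a x with hax | hax
    · exfalso
      have m1 : mu.rowLen x ≤ mu.rowLen (a+1) := mu.rowLen_anti _ _ (by omega)
      have m3 : lam.rowLen (a+1) ≤ lam.rowLen a := lam.rowLen_anti _ _ (by omega)
      have hS2 : (a+1, b+1) ∈ skewCells lam mu := by rw [skew_mem_iff]; omega
      have := hfuniq e h1 (by omega) (a+1, b+1) hS2 (by push_cast; omega)
      rw [hp] at this
      simp only [Prod.mk.injEq] at this
      omega
    · rcases Nat.lt_or_ge (x+1) a with hxa | hxa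
      · exfalso
        have m1 : mu.rowLen a ≤ mu.rowLen (x+1) := mu.rowLen_anti _ _ (by omega)
        have m3 : lam.rowLen (x+1) ≤ lam.rowLen x := lam.rowLen_anti _ _ (by omega)
        have hS2 : (x+1, y) ∈ skewCells lam mu := by rw [skew_mem_iff]; omega
        have := hfuniq e h1 (by omega) (x+1, y) hS2 (by push_cast; omega)
        rw [hp] at this
        simp only [Prod.mk.injEq] at this
        omega
      · simp only
        omega
  -- row monotonicity
  have hmono0 : ∀ mm : ℕ, ∀ e : ℤ, d + 1 - n ≤ e → e + mm ≤ d →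
      (f (e + mm)).1 ≤ (f e).1 := by
    intro mm
    induction mm with
    | zero => intro e _ _; simp
    | succ mm ih =>
      intro e h1 h2
      have h3 : e + (mm:ℤ) ≤ d := by push_cast at h2; omega
      have h4 := ih e h1 (by omega)
      have h5 := hstep (e + mm) (by omega) (by push_cast at h2; omega)
      have h6 : e + ((mm+1:ℕ):ℤ) = (e + mm) + 1 := by push_cast; ring
      rw [h6]
      omega
  have hmono : ∀ e e' : ℤ, d + 1 - n ≤ e → e ≤ e' → e' ≤ d → (f e').1 ≤ (f e).1 := by
    intro e e' h1 h2 h3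
    have := hmono0 (e' - e).toNat e h1 (by omega)
    have heq : e + ((e' - e).toNat : ℤ) = e' := by omega
    rwa [heq] at this
  set r : ℕ := (f d).1 with hr
  set r' : ℕ := (f (d + 1 - n)).1 with hr'
  have hrr : r ≤ r' := hmono (d+1-n) d (by omega) (by omega) le_rfl
  -- surjectivity onto rows
  have hsurj : ∀ k : ℕ, r ≤ k → k ≤ r' → ∃ e : ℤ, d + 1 - n ≤ e ∧ e ≤ d ∧ (f e).1 = k := by
    intro k hk1 hk2
    set A : Finset ℤ := (Finset.Icc (d+1-n) d).filter (fun e => k ≤ (f e).1) with hA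
    have hAne : A.Nonempty := by
      refine ⟨d + 1 - n, ?_⟩
      rw [hA, Finset.mem_filter, Finset.mem_Icc]
      exact ⟨⟨le_rfl, by omega⟩, hk2⟩
    set es : ℤ := A.max' hAne with hes
    have hesA : es ∈ A := A.max'_mem hAne
    rw [hA, Finset.mem_filter, Finset.mem_Icc] at hesA
    obtain ⟨⟨he1, he2⟩, he3⟩ := hesA
    refine ⟨es, he1, he2, ?_⟩
    by_contra hne
    have hgt : k < (f es).1 := by omega
    have hesd : es < d := by
      rcases eq_or_lt_of_le he2 with heq | hlt
      · exfalso; rw [heq] at hgt; omega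
      · exact hlt
    have h5 := hstep es he1 hesd
    have : es + 1 ∈ A := by
      rw [hA, Finset.mem_filter, Finset.mem_Icc]
      exact ⟨⟨by omega, by omega⟩, by omega⟩
    have := A.le_max' _ this
    omega
  -- all rows of cells lie in [r, r']
  have hrows : ∀ p ∈ skewCells lam mu, r ≤ p.1 ∧ p.1 ≤ r' := by
    intro p hp
    have h1 := hmem_ge p hp
    rw [hm0val] at h1
    have h2 := hmem_le p hp
    have h3 := hfuniq _ h1 h2 p hp rfl
    constructor
    · have := hmono ((p.2:ℤ) - p.1) d h1 h2 le_rfl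
      rw [← h3] at this
      exact this
    · have := hmono (d+1-n) ((p.2:ℤ) - p.1) (by omega) h1 h2
      rw [← h3] at this
      exact this
  have houtside : ∀ k, (k < r ∨ r' < k) → mu.rowLen k = lam.rowLen k := by
    intro k hk
    have h1 := rowLen_mono hle k
    by_contra hc
    have h2 : (k, lam.rowLen k) ∈ skewCells lam mu := by rw [skew_mem_iff]; omega
    have := hrows _ h2
    simp only at this
    omega
  have hocc : ∀ k, r ≤ k → k ≤ r' → lam.rowLen k < mu.rowLen k := by
    intro k h1 h2
    obtain ⟨e, he1, he2, he3⟩ := hsurj k h1 h2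
    have h4 := hfS e he1 he2
    rcases hfe : f e with ⟨a, b⟩
    rw [hfe] at h4 he3
    simp only at he3
    subst he3
    rw [skew_mem_iff] at h4
    omega
  have hedge1 : ∀ k, r ≤ k → k ≤ r' → (k, lam.rowLen k) ∈ skewCells lam mu := by
    intro k h1 h2
    rw [skew_mem_iff]
    have := hocc k h1 h2
    omega
  have hedge2 : ∀ k, r ≤ k → k ≤ r' → (k, mu.rowLen k - 1) ∈ skewCells lam mu := by
    intro k h1 h2
    rw [skew_mem_iff]
    have := hocc k h1 h2
    omega
  have hblam : ∀ k, r ≤ k → k ≤ r' → d + 1 - n ≤ beta lam k ∧ beta lam k ≤ d := by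
    intro k h1 h2
    have h3 := hedge1 k h1 h2
    have h4 := hmem_ge _ h3
    have h5 := hmem_le _ h3
    rw [hm0val] at h4
    simp only at h4 h5
    unfold beta
    omega
  have hbmu2 : ∀ k, r ≤ k → k ≤ r' → d + 2 - n ≤ beta mu k ∧ beta mu k ≤ d + 1 := by
    intro k h1 h2
    have h3 := hedge2 k h1 h2
    have h4 := hmem_ge _ h3
    have h5 := hmem_le _ h3
    rw [hm0val] at h4
    simp only at h4 h5
    have h6 := hocc k h1 h2
    unfold beta
    omega
  have hhead : beta mu r = d + 1 := by
    have h1 : beta mu r ≤ d + 1 := (hbmu2 r le_rfl hrr).2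
    rcases hfe : f d with ⟨a, cd⟩
    have h2 := hfS d (by omega) le_rfl
    have h3 := hfc d (by omega) le_rfl
    rw [hfe] at h2 h3
    have h4 : a = r := by rw [hr, hfe]
    subst h4
    rw [skew_mem_iff] at h2
    simp only at h3
    have hb : beta mu r = (mu.rowLen r : ℤ) - r := rfl
    omega
  have htail : beta lam r' = d + 1 - n := by
    have h1 : d + 1 - n ≤ beta lam r' := (hblam r' hrr le_rfl).1
    rcases hfe : f (d+1-n) with ⟨a, c⟩
    have h2 := hfS (d+1-n) le_rfl (by omega)
    have h3 := hfc (d+1-n) le_rfl (by omega)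
    rw [hfe] at h2 h3
    have h4 : a = r' := by rw [hr', hfe]
    subst h4
    rw [skew_mem_iff] at h2
    simp only at h3
    have hb : beta lam r' = (lam.rowLen r' : ℤ) - r' := rfl
    omega
  have hmidd : ∀ k, r ≤ k → k < r' → beta mu (k+1) = beta lam k := by
    intro k h1 h2
    set e : ℤ := beta lam k with he
    obtain ⟨he1, he2⟩ := hblam k h1 (by omega)
    have hcell : (k, lam.rowLen k) ∈ skewCells lam mu := hedge1 k h1 (by omega)
    have hbk : beta lam k = (lam.rowLen k : ℤ) - k := rfl
    have hfek : f e = (k, lam.rowLen k) :=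
      (hfuniq e he1 he2 _ hcell (by simp only; omega)).symm
    have hene : e ≠ d + 1 - n := by
      intro hc
      have : f e = f (d+1-n) := by rw [hc]
      rw [hfek] at this
      have : k = r' := by rw [hr', ← this]
      omega
    have he1' : d + 1 - n ≤ e - 1 := by omega
    have hstepe := hstep (e-1) he1' (by omega)
    have hee : e - 1 + 1 = e := by omega
    rw [hee] at hstepe
    rw [hfek] at hstepe
    simp only at hstepe
    -- f (e-1) is in row k+1
    rcases hfe1 : f (e-1) with ⟨a1, c1⟩
    rw [hfe1] at hstepe
    simp only at hstepe
    have hf1S := hfS (e-1) he1' (by omega)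
    have hf1c := hfc (e-1) he1' (by omega)
    rw [hfe1] at hf1S hf1c
    simp only at hf1c
    rw [skew_mem_iff] at hf1S
    have hstepe' : k = a1 ∨ k + 1 = a1 := hstepe
    have ha1 : a1 = k + 1 := by
      rcases hstepe' with hh | hh
      · exfalso
        have hbk2 : e = (lam.rowLen k:ℤ) - (k:ℤ) := by rw [he]; exact hbk
        rw [← hh] at hf1S
        have hcc : (c1:ℤ) = e - 1 + k := by omega
        omega
      · omega
    subst ha1
    -- the top cell of row k+1
    set e'' : ℤ := beta mu (k+1) - 1 with he''
    obtain ⟨hb1, hb2⟩ := hbmu2 (k+1) (by omega) (by omega)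
    have hcell2 : (k+1, mu.rowLen (k+1) - 1) ∈ skewCells lam mu := hedge2 (k+1) (by omega) (by omega)
    have hocc2 := hocc (k+1) (by omega) (by omega)
    have hbmu3 : beta mu (k+1) = (mu.rowLen (k+1) : ℤ) - (k+1) := rfl
    have hfe'' : f e'' = (k+1, mu.rowLen (k+1) - 1) := by
      refine (hfuniq e'' (by omega) (by omega) _ hcell2 ?_).symm
      simp only
      push_cast at hbmu3 ⊢
      omega
    -- e'' cannot be ≥ e
    have hlt : e'' < e := by
      by_contra hc
      have h7 := hmono e e'' he1 (by omega) (by omega)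
      rw [hfek, hfe''] at h7
      simp only at h7
      omega
    -- but the cell f(e-1) in row k+1 has column ≤ mu.rowLen (k+1) - 1
    have hb3 : beta mu (k+1) = (mu.rowLen (k+1) : ℤ) - (k+1) := rfl
    have : e - 1 ≤ e'' := by
      have : (c1:ℤ) < (mu.rowLen (k+1) : ℤ) := by exact_mod_cast hf1S.1
      push_cast at hb3
      omega
    omega
  -- spin
  have himg : (skewCells lam mu).image Prod.fst = Finset.Icc r r' := by
    apply Finset.ext
    intro k
    rw [Finset.mem_image, Finset.mem_Icc]
    constructor
    · rintro ⟨p, hp, rfl⟩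
      exact hrows p hp
    · rintro ⟨h1, h2⟩
      exact ⟨(k, lam.rowLen k), hedge1 k h1 h2, rfl⟩
  have hspin : spinZ lam mu = (r' : ℤ) - r := by
    unfold spinZ
    rw [himg, Nat.card_Icc]
    push_cast [hrr]
    omega
  exact ⟨r, r', hrr, fun k hk => houtside k (Or.inl hk), fun k hk => houtside k (Or.inr hk),
    hmidd, hhead, htail, fun k h1 h2 => ⟨(hblam k h1 h2).2, (hbmu2 k h1 h2).1, hocc k h1 h2⟩,
    hspin⟩

/-- Indicator of a bead. -/
def bInd (lam : YoungDiagram) (x : ℤ) : ℤ := if Bead lam x then 1 else 0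

/-- Number of beads in the open window of length `n` below `e`. -/
def bCount (n : ℕ) (lam : YoungDiagram) (e : ℤ) : ℤ :=
  ∑ x ∈ Finset.Ico (e + 1 - n) e, bInd lam x

theorem bCount_filter (n : ℕ) (lam : YoungDiagram) (e : ℤ) :
    bCount n lam e = ((Finset.Ico (e + 1 - n) e).filter (fun x => Bead lam x)).card := by
  unfold bCount bInd
  rw [Finset.sum_ite, Finset.sum_const, Finset.sum_const]
  simp

theorem addable_beads (n : ℕ) (hn : 1 ≤ n) (lam mu : YoungDiagram) (d : ℤ)
    (h : IsRibbon n lam mu d) :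
    ¬ Bead lam (d + 1) ∧ Bead lam (d + 1 - n) ∧ spinZ lam mu = bCount n lam (d + 1) := by
  obtain ⟨r, r', hrr, hlow, hhigh, hmid, hhead, htail, hwin, hspin⟩ :=
    ribbon_data n hn lam mu d h
  have hbmu := beta_strictAnti mu
  have hbla := beta_strictAnti lam
  have hout : ∀ k, (k < r ∨ r' < k) → beta mu k = beta lam k := by
    intro k hk
    unfold beta
    rcases hk with hk | hk
    · rw [hlow k hk]
    · rw [hhigh k hk]
  refine ⟨?_, ⟨r', htail⟩, ?_⟩
  · rintro ⟨k, hk⟩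
    have hkr' : k < r' := by
      by_contra hc
      have : beta lam k ≤ beta lam r' := hbla.antitone (by omega)
      omega
    rcases Nat.lt_or_ge k r with h1 | h1
    · have h2 := hout k (Or.inl h1)
      have h3 : beta mu r < beta mu k := hbmu h1
      omega
    · have := (hwin k h1 (by omega)).1
      omega
  · have himg : (Finset.Ico (d + 2 - n) (d + 1)).filter (fun x => Bead lam x) =
        (Finset.Ico r r').image (beta lam) := by
      apply Finset.ext
      intro x
      rw [Finset.mem_filter, Finset.mem_Ico, Finset.mem_image]
      constructor
      · rintro ⟨⟨h1, h2⟩, k, hk⟩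
        refine ⟨k, Finset.mem_Ico.mpr ⟨?_, ?_⟩, hk⟩
        · by_contra hc
          have h3 := hout k (Or.inl (by omega))
          have h4 : beta mu r < beta mu k := hbmu (by omega)
          omega
        · by_contra hc
          have : beta lam k ≤ beta lam r' := hbla.antitone (by omega)
          omega
      · rintro ⟨k, hk, rfl⟩
        rw [Finset.mem_Ico] at hk
        have h1 := (hwin k hk.1 (by omega)).1
        have h2 : beta lam r' < beta lam k := hbla (by omega)
        exact ⟨⟨by omega, by omega⟩, k, rfl⟩
    rw [bCount_filter]
    have harith : d + 1 + 1 - (n:ℤ) = d + 2 - n := by ring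
    rw [harith, himg, Finset.card_image_of_injOn (fun a _ b _ hab => hbla.injective hab),
      Nat.card_Ico, hspin]
    omega

theorem removable_beads (n : ℕ) (hn : 1 ≤ n) (lam nu : YoungDiagram) (d : ℤ)
    (h : IsRibbon n nu lam d) :
    Bead lam (d + 1) ∧ ¬ Bead lam (d + 1 - n) ∧ spinZ nu lam = bCount n lam (d + 1) := by
  obtain ⟨r, r', hrr, hlow, hhigh, hmid, hhead, htail, hwin, hspin⟩ :=
    ribbon_data n hn nu lam d h
  have hbnu := beta_strictAnti nu
  have hbla := beta_strictAnti lam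
  have hout : ∀ k, (k < r ∨ r' < k) → beta lam k = beta nu k := by
    intro k hk
    unfold beta
    rcases hk with hk | hk
    · rw [hlow k hk]
    · rw [hhigh k hk]
  refine ⟨⟨r, hhead⟩, ?_, ?_⟩
  · rintro ⟨k, hk⟩
    rcases Nat.lt_or_ge r' k with h1 | h1
    · have h2 := hout k (Or.inr h1)
      have h3 : beta nu k < beta nu r' := hbnu h1
      omega
    · rcases Nat.lt_or_ge k r with h2 | h2
      · have : beta lam r < beta lam k := hbla h2
        omega
      · have := (hwin k h2 h1).2.1
        omega
  · have himg : (Finset.Ico (d + 2 - n) (d + 1)).filter (fun x => Bead lam x) =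
        (Finset.Ico (r+1) (r'+1)).image (beta lam) := by
      apply Finset.ext
      intro x
      rw [Finset.mem_filter, Finset.mem_Ico, Finset.mem_image]
      constructor
      · rintro ⟨⟨h1, h2⟩, k, hk⟩
        refine ⟨k, Finset.mem_Ico.mpr ⟨?_, ?_⟩, hk⟩
        · by_contra hc
          have : beta lam r ≤ beta lam k := hbla.antitone (by omega)
          omega
        · by_contra hc
          have h3 := hout k (Or.inr (by omega))
          have h4 : beta nu k ≤ beta nu (r'+1) := hbnu.antitone (by omega)
          have h5 : beta nu (r'+1) < beta nu r' := hbnu (by omega)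
          omega
      · rintro ⟨k, hk, rfl⟩
        rw [Finset.mem_Ico] at hk
        have h1 := (hwin k (by omega) (by omega)).2.1
        have h2 : beta lam k < beta lam r := hbla (by omega)
        exact ⟨⟨by omega, by omega⟩, k, rfl⟩
    rw [bCount_filter]
    have harith : d + 1 + 1 - (n:ℤ) = d + 2 - n := by ring
    rw [harith, himg, Finset.card_image_of_injOn (fun a _ b _ hab => hbla.injective hab),
      Nat.card_Ico, hspin]
    omega

theorem exists_addable (n : ℕ) (hn : 1 ≤ n) (lam : YoungDiagram) (d : ℤ)
    (hb1 : ¬ Bead lam (d + 1)) (hb2 : Bead lam (d + 1 - n)) :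
    ∃ mu, IsRibbon n lam mu d := by
  obtain ⟨r', hr'⟩ := hb2
  have hbla := beta_strictAnti lam
  have hbeta : ∀ k, beta lam k = (lam.rowLen k : ℤ) - k := fun k => rfl
  obtain ⟨r, hrle, hrlt⟩ : ∃ r : ℕ, beta lam r ≤ d ∧ ∀ k, k < r → d + 2 ≤ beta lam k :=
    ⟨rowOf lam d, beta_rowOf_le lam d, fun k hk => by
      have h1 := lt_beta_of_lt_rowOf lam d hk
      have h2 : beta lam k ≠ d + 1 := fun hc => hb1 ⟨k, hc⟩
      omega⟩
  have hrr : r ≤ r' := by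
    by_contra hc
    have := hrlt r' (by omega)
    omega
  have hd_r : -(r:ℤ) ≤ beta lam r := neg_le_beta lam r
  obtain ⟨N0, hN0⟩ := rowLen_eventually_zero lam
  set g : ℕ → ℕ := fun k =>
    if k < r then lam.rowLen k
    else if k = r then (d + 1 + r).toNat
    else if k ≤ r' then lam.rowLen (k-1) + 1
    else lam.rowLen k with hg
  have hg1 : ∀ k, k < r → g k = lam.rowLen k := by
    intro k hk; simp only [hg]; rw [if_pos hk]
  have hg2 : g r = (d + 1 + r).toNat := by
    simp only [hg]; rw [if_neg (by omega)]; simp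
  have hg3 : ∀ k, r < k → k ≤ r' → g k = lam.rowLen (k-1) + 1 := by
    intro k h1 h2; simp only [hg]; rw [if_neg (by omega), if_neg (by omega), if_pos h2]
  have hg4 : ∀ k, r' < k → g k = lam.rowLen k := by
    intro k h1; simp only [hg]; rw [if_neg (by omega), if_neg (by omega), if_neg (by omega)]
  have hanti : ∀ k, g (k+1) ≤ g k := by
    intro k
    rcases Nat.lt_or_ge (k+1) r with h1 | h1
    · rw [hg1 (k+1) h1, hg1 k (by omega)]
      exact lam.rowLen_anti k (k+1) (by omega)
    rcases Nat.eq_or_lt_of_le h1 with h2 | h2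
    · -- r = k+1
      subst h2
      rw [hg2, hg1 k (by omega)]
      have h3 := hrlt k (by omega)
      rw [hbeta k] at h3
      omega
    have h3 : r ≤ k := by omega
    rcases Nat.eq_or_lt_of_le h3 with h4 | h4
    · -- r = k
      subst h4
      rw [hg2]
      rcases Nat.lt_or_ge r r' with h5 | h5
      · rw [hg3 (r+1) (by omega) (by omega)]
        simp only [Nat.add_sub_cancel]
        rw [hbeta r] at hrle
        omega
      · rw [hg4 (r+1) (by omega)]
        have h6 := lam.rowLen_anti r (r+1) (by omega)
        rw [hbeta r] at hrle
        omega
    -- r < k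
    rcases Nat.lt_or_ge k r' with h5 | h5
    · rw [hg3 k (by omega) (by omega), hg3 (k+1) (by omega) (by omega)]
      simp only [Nat.add_sub_cancel]
      have := lam.rowLen_anti (k-1) k (by omega)
      omega
    rcases Nat.eq_or_lt_of_le h5 with h6 | h6
    · -- r' = k
      subst h6
      rw [hg3 r' (by omega) (by omega), hg4 (r'+1) (by omega)]
      have := lam.rowLen_anti (r'-1) (r'+1) (by omega)
      omega
    · rw [hg4 k (by omega), hg4 (k+1) (by omega)]
      exact lam.rowLen_anti k (k+1) (by omega)
  have hNz : ∀ k, max N0 (r'+1) ≤ k → g k = 0 := by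
    intro k hk
    rw [hg4 k (by omega)]
    exact hN0 k (by omega)
  refine ⟨ofFn g hanti _ hNz, ?_⟩
  have hrl : ∀ k, (ofFn g hanti _ hNz).rowLen k = g k := rowLen_ofFn g hanti _ hNz
  have hbmu : ∀ k, beta (ofFn g hanti _ hNz) k = (g k : ℤ) - k := by
    intro k
    unfold beta
    rw [hrl k]
  apply isRibbon_of_data n hn lam _ d r r' hrr
  · intro k hk; rw [hrl, hg1 k hk]
  · intro k hk; rw [hrl, hg4 k hk]
  · intro k h1 h2
    rw [hbmu (k+1), hg3 (k+1) (by omega) (by omega), hbeta k]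
    simp only [Nat.add_sub_cancel]
    push_cast
    ring
  · rw [hbmu r, hg2]
    omega
  · exact hr'
  · apply le_of_rowLen_le
    intro k
    rw [hrl]
    rcases Nat.lt_or_ge k r with h1 | h1
    · rw [hg1 k h1]
    rcases Nat.eq_or_lt_of_le h1 with h2 | h2
    · subst h2
      rw [hg2]
      rw [hbeta r] at hrle
      omega
    rcases Nat.lt_or_ge r' k with h3 | h3
    · rw [hg4 k h3]
    · rw [hg3 k (by omega) h3]
      have := lam.rowLen_anti (k-1) k (by omega)
      omega

theorem exists_removable (n : ℕ) (hn : 1 ≤ n) (lam : YoungDiagram) (d : ℤ)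
    (hb1 : Bead lam (d + 1)) (hb2 : ¬ Bead lam (d + 1 - n)) :
    ∃ nu, IsRibbon n nu lam d := by
  obtain ⟨r, hr⟩ := hb1
  have hbla := beta_strictAnti lam
  have hbeta : ∀ k, beta lam k = (lam.rowLen k : ℤ) - k := fun k => rfl
  have hex : ∃ k, beta lam (k+1) ≤ d - n := by
    obtain ⟨N, hN⟩ := beta_lt_of_large lam (d - n)
    exact ⟨N, (hN (N+1) (by omega)).le⟩
  obtain ⟨r', hr'1, hr'2⟩ : ∃ r' : ℕ, beta lam (r'+1) ≤ d - n ∧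
      ∀ k, k < r' → d + 1 - n ≤ beta lam (k+1) :=
    ⟨Nat.find hex, Nat.find_spec hex, fun k hk => by
      have := Nat.find_min hex hk
      omega⟩
  have hge : ∀ k, k ≤ r' → d + 2 - n ≤ beta lam k := by
    intro k hk
    rcases Nat.eq_zero_or_pos k with h0 | h0
    · subst h0
      have h1 : beta lam r ≤ beta lam 0 := hbla.antitone (Nat.zero_le r)
      omega
    · have h1 := hr'2 (k-1) (by omega)
      have h2 : k - 1 + 1 = k := by omega
      rw [h2] at h1
      have h3 : beta lam k ≠ d + 1 - n := fun hc => hb2 ⟨k, hc⟩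
      omega
  have hrr : r ≤ r' := by
    by_contra hc
    have h1 : beta lam (r'+1) ≥ beta lam r ∨ r = r' + 1 := by
      rcases Nat.lt_or_ge (r'+1) r with hh | hh
      · exact Or.inl ((hbla.antitone (by omega)))
      · exact Or.inr (by omega)
    rcases h1 with h1 | h1
    · omega
    · rw [← h1] at hr'1
      omega
  have hposr' : 0 ≤ d + 1 - n + r' := by
    have := neg_le_beta lam (r'+1)
    push_cast at this
    omega
  have hrowpos : ∀ k, k ≤ r' → 1 ≤ lam.rowLen k := by
    intro k hk
    have h1 := hge r' le_rfl
    rw [hbeta r'] at h1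
    exact le_trans (by omega) (lam.rowLen_anti k r' hk)
  obtain ⟨N0, hN0⟩ := rowLen_eventually_zero lam
  set g : ℕ → ℕ := fun k =>
    if k < r then lam.rowLen k
    else if k < r' then lam.rowLen (k+1) - 1
    else if k = r' then (d + 1 - n + r').toNat
    else lam.rowLen k with hg
  have hg1 : ∀ k, k < r → g k = lam.rowLen k := by
    intro k hk; simp only [hg]; rw [if_pos hk]
  have hg2 : ∀ k, r ≤ k → k < r' → g k = lam.rowLen (k+1) - 1 := by
    intro k h1 h2; simp only [hg]; rw [if_neg (by omega), if_pos h2]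
  have hg3 : g r' = (d + 1 - n + r').toNat := by
    simp only [hg]; rw [if_neg (by omega), if_neg (by omega)]; simp
  have hg4 : ∀ k, r' < k → g k = lam.rowLen k := by
    intro k h1; simp only [hg]; rw [if_neg (by omega), if_neg (by omega), if_neg (by omega)]
  have hanti : ∀ k, g (k+1) ≤ g k := by
    intro k
    rcases Nat.lt_or_ge (k+1) r with h1 | h1
    · rw [hg1 (k+1) h1, hg1 k (by omega)]
      exact lam.rowLen_anti k (k+1) (by omega)
    rcases Nat.lt_or_ge k r with h2 | h2
    · -- r = k + 1
      have hkr : r = k + 1 := by omega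
      subst hkr
      rw [hg1 k (by omega)]
      rcases Nat.lt_or_ge (k+1) r' with h3 | h3
      · rw [hg2 (k+1) (by omega) h3]
        have := lam.rowLen_anti k (k+1+1) (by omega)
        omega
      · have h4 : k + 1 = r' := by omega
        rw [h4, hg3]
        have h5 : beta lam (k+1) = d + 1 := hr
        rw [hbeta (k+1)] at h5
        have := lam.rowLen_anti k (k+1) (by omega)
        push_cast at h5
        omega
    rcases Nat.lt_or_ge (k+1) r' with h3 | h3
    · rw [hg2 k (by omega) (by omega), hg2 (k+1) (by omega) h3]
      have := lam.rowLen_anti (k+1) (k+1+1) (by omega)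
      omega
    rcases Nat.lt_or_ge k r' with h4 | h4
    · -- k + 1 = r'
      have hkr : r' = k + 1 := by omega
      subst hkr
      rw [hg2 k (by omega) (by omega), hg3]
      have h5 := hge (k+1) (by omega)
      rw [hbeta (k+1)] at h5
      push_cast at h5 ⊢
      omega
    rcases Nat.eq_or_lt_of_le h4 with h5 | h5
    · -- r' = k
      subst h5
      rw [hg3, hg4 (r'+1) (by omega)]
      have h6 : beta lam (r'+1) ≤ d - n := hr'1
      rw [hbeta (r'+1)] at h6
      push_cast at h6 ⊢
      omega
    · rw [hg4 k h5, hg4 (k+1) (by omega)]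
      exact lam.rowLen_anti k (k+1) (by omega)
  have hNz : ∀ k, max N0 (r'+1) ≤ k → g k = 0 := by
    intro k hk
    rw [hg4 k (by omega)]
    exact hN0 k (by omega)
  refine ⟨ofFn g hanti _ hNz, ?_⟩
  have hrl : ∀ k, (ofFn g hanti _ hNz).rowLen k = g k := rowLen_ofFn g hanti _ hNz
  have hbnu : ∀ k, beta (ofFn g hanti _ hNz) k = (g k : ℤ) - k := by
    intro k
    unfold beta
    rw [hrl k]
  apply isRibbon_of_data n hn _ lam d r r' hrr
  · intro k hk; rw [hrl, hg1 k hk]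
  · intro k hk; rw [hrl, hg4 k hk]
  · intro k h1 h2
    rw [hbeta (k+1), hbnu k, hg2 k h1 h2]
    have := hrowpos (k+1) (by omega)
    push_cast [this]
    omega
  · exact hr
  · rw [hbnu r', hg3]
    omega
  · apply le_of_rowLen_le
    intro k
    rw [hrl]
    rcases Nat.lt_or_ge k r with h1 | h1
    · rw [hg1 k h1]
    rcases Nat.lt_or_ge k r' with h2 | h2
    · rw [hg2 k h1 h2]
      have := lam.rowLen_anti k (k+1) (by omega)
      omega
    rcases Nat.eq_or_lt_of_le h2 with h3 | h3
    · subst h3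
      rw [hg3]
      have h4 := hge r' le_rfl
      rw [hbeta r'] at h4
      omega
    · rw [hg4 k h3]

theorem sum_Ico_shift (f : ℤ → ℤ) (a b : ℤ) (hab : a ≤ b) :
    ∑ x ∈ Finset.Ico (a+1) (b+1), f x = (∑ x ∈ Finset.Ico a b, f x) + f b - f a := by
  have h1 : Finset.Ico a (b+1) = insert b (Finset.Ico a b) := by
    apply Finset.ext; intro x; rw [Finset.mem_insert, Finset.mem_Ico, Finset.mem_Ico]; omega
  have h2 : Finset.Ico a (b+1) = insert a (Finset.Ico (a+1) (b+1)) := by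
    apply Finset.ext; intro x; rw [Finset.mem_insert, Finset.mem_Ico, Finset.mem_Ico]; omega
  have h3 : b ∉ Finset.Ico a b := by rw [Finset.mem_Ico]; omega
  have h4 : a ∉ Finset.Ico (a+1) (b+1) := by rw [Finset.mem_Ico]; omega
  have e1 : ∑ x ∈ Finset.Ico a (b+1), f x = f b + ∑ x ∈ Finset.Ico a b, f x := by
    rw [h1, Finset.sum_insert h3]
  have e2 : ∑ x ∈ Finset.Ico a (b+1), f x = f a + ∑ x ∈ Finset.Ico (a+1) (b+1), f x := by
    rw [h2, Finset.sum_insert h4]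
  omega

theorem bCount_step (n : ℕ) (hn : 1 ≤ n) (lam : YoungDiagram) (e : ℤ) :
    bCount n lam (e+1) = bCount n lam e + bInd lam e - bInd lam (e+1-n) := by
  unfold bCount
  have h0 : e + 1 + 1 - (n:ℤ) = (e + 1 - n) + 1 := by ring
  have h1 : (1:ℤ) ≤ n := by exact_mod_cast hn
  rw [h0, sum_Ico_shift _ _ _ (by omega)]

theorem bCount_diff (n : ℕ) (hn : 1 ≤ n) (lam : YoungDiagram) (s : ℤ) :
    ∀ m : ℕ, (∀ e : ℤ, s < e → e < s + m + 1 → bInd lam e = bInd lam (e - n)) →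
    bCount n lam (s + m + 1) - bCount n lam s = bInd lam s - bInd lam (s + m + 1 - n) := by
  intro m
  induction m with
  | zero =>
    intro _
    have hstep := bCount_step n hn lam s
    simp only [Nat.cast_zero, add_zero]
    omega
  | succ m ih =>
    intro hmidf
    have ih' := ih (fun e he1 he2 => hmidf e he1 (by push_cast at he2 ⊢; omega))
    have hstep := bCount_step n hn lam (s + m + 1)
    have hm := hmidf (s + (m:ℤ) + 1) (by omega) (by push_cast; omega)
    have hc1 : s + ((m+1:ℕ):ℤ) + 1 = (s + (m:ℤ) + 1) + 1 := by push_cast; ring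
    rw [hc1]
    have hm' : bInd lam (s + (m:ℤ) + 1) = bInd lam (s + (m:ℤ) + 1 - n) := hm
    omega

/-- van Leeuwen's lemma: if ribbons `R_i`, `R_j` can be added or removed
on diagonals `i < j` with no addable or removable ribbon strictly in between, then exactly
one of the following holds: both addable with `spin(R_j) = spin(R_i) - 1`; both removable
with `spin(R_j) = spin(R_i) + 1`; one addable and one removable with equal spins. -/
theorem van_leeuwen_spins (n : ℕ) (hn : 1 ≤ n) (lam mui muj : YoungDiagram) (i j : ℤ)
    (hij : i < j)
    (hi : IsRibbon n lam mui i ∨ IsRibbon n mui lam i)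
    (hj : IsRibbon n lam muj j ∨ IsRibbon n muj lam j)
    (hmid : ∀ e : ℤ, i < e → e < j → ¬ ∃ nu, IsRibbon n lam nu e ∨ IsRibbon n nu lam e) :
    ((IsRibbon n lam mui i ∧ IsRibbon n lam muj j ∧ spinZ lam muj = spinZ lam mui - 1) ∨
     (IsRibbon n mui lam i ∧ IsRibbon n muj lam j ∧ spinZ muj lam = spinZ mui lam + 1) ∨
     ((IsRibbon n lam mui i ∧ IsRibbon n muj lam j ∧ spinZ muj lam = spinZ lam mui) ∨
      (IsRibbon n mui lam i ∧ IsRibbon n lam muj j ∧ spinZ lam muj = spinZ mui lam))) ∧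
    ¬ ((IsRibbon n lam mui i ∧ IsRibbon n lam muj j ∧ spinZ lam muj = spinZ lam mui - 1) ∧
       (IsRibbon n mui lam i ∧ IsRibbon n muj lam j ∧ spinZ muj lam = spinZ mui lam + 1)) ∧
    ¬ ((IsRibbon n lam mui i ∧ IsRibbon n lam muj j ∧ spinZ lam muj = spinZ lam mui - 1) ∧
       ((IsRibbon n lam mui i ∧ IsRibbon n muj lam j ∧ spinZ muj lam = spinZ lam mui) ∨
        (IsRibbon n mui lam i ∧ IsRibbon n lam muj j ∧ spinZ lam muj = spinZ mui lam))) ∧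
    ¬ ((IsRibbon n mui lam i ∧ IsRibbon n muj lam j ∧ spinZ muj lam = spinZ mui lam + 1) ∧
       ((IsRibbon n lam mui i ∧ IsRibbon n muj lam j ∧ spinZ muj lam = spinZ lam mui) ∨
        (IsRibbon n mui lam i ∧ IsRibbon n lam muj j ∧ spinZ lam muj = spinZ mui lam))) := by
  -- exclusivity: a ribbon cannot be simultaneously addable and removable
  have hnotboth : ∀ (mu : YoungDiagram) (e e' : ℤ),
      IsRibbon n lam mu e → IsRibbon n mu lam e' → False := by
    intro mu e e' h1 h2
    have heq : lam = mu := le_antisymm h1.1 h2.1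
    subst heq
    have hc := h1.2.1
    unfold skewCells at hc
    rw [Finset.sdiff_self, Finset.card_empty] at hc
    omega
  -- middle bead condition
  have hmidbead : ∀ e : ℤ, i + 1 < e → e < j + 1 → bInd lam e = bInd lam (e - n) := by
    intro e he1 he2
    by_cases h1 : Bead lam e <;> by_cases h2 : Bead lam (e - n)
    · unfold bInd; rw [if_pos h1, if_pos h2]
    · exfalso
      obtain ⟨nu, hnu⟩ := exists_removable n hn lam (e-1)
        (by rwa [show e - 1 + 1 = e by ring]) (by rwa [show e - 1 + 1 - (n:ℤ) = e - n by ring])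
      exact hmid (e-1) (by omega) (by omega) ⟨nu, Or.inr hnu⟩
    · exfalso
      obtain ⟨mu', hmu'⟩ := exists_addable n hn lam (e-1)
        (by rwa [show e - 1 + 1 = e by ring]) (by rwa [show e - 1 + 1 - (n:ℤ) = e - n by ring])
      exact hmid (e-1) (by omega) (by omega) ⟨mu', Or.inl hmu'⟩
    · unfold bInd; rw [if_neg h1, if_neg h2]
  -- telescoping
  set m : ℕ := (j - i - 1).toNat with hm
  have hjm : (i+1) + (m:ℤ) + 1 = j + 1 := by omega
  have htel := bCount_diff n hn lam (i+1) m (by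
    intro e he1 he2
    rw [hjm] at he2
    exact hmidbead e (by omega) (by omega))
  rw [hjm] at htel
  refine ⟨?_, ?_, ?_, ?_⟩
  · -- main disjunction
    rcases hi with hia | hir <;> rcases hj with hja | hjr
    · obtain ⟨hb1i, hb2i, hsi⟩ := addable_beads n hn lam mui i hia
      obtain ⟨hb1j, hb2j, hsj⟩ := addable_beads n hn lam muj j hja
      have hI1 : bInd lam (i+1) = 0 := by unfold bInd; rw [if_neg hb1i]
      have hI2 : bInd lam (j+1-n) = 1 := by unfold bInd; rw [if_pos hb2j]
      exact Or.inl ⟨hia, hja, by omega⟩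
    · obtain ⟨hb1i, hb2i, hsi⟩ := addable_beads n hn lam mui i hia
      obtain ⟨hb1j, hb2j, hsj⟩ := removable_beads n hn lam muj j hjr
      have hI1 : bInd lam (i+1) = 0 := by unfold bInd; rw [if_neg hb1i]
      have hI2 : bInd lam (j+1-n) = 0 := by unfold bInd; rw [if_neg hb2j]
      exact Or.inr (Or.inr (Or.inl ⟨hia, hjr, by omega⟩))
    · obtain ⟨hb1i, hb2i, hsi⟩ := removable_beads n hn lam mui i hir
      obtain ⟨hb1j, hb2j, hsj⟩ := addable_beads n hn lam muj j hja
      have hI1 : bInd lam (i+1) = 1 := by unfold bInd; rw [if_pos hb1i]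
      have hI2 : bInd lam (j+1-n) = 1 := by unfold bInd; rw [if_pos hb2j]
      exact Or.inr (Or.inr (Or.inr ⟨hir, hja, by omega⟩))
    · obtain ⟨hb1i, hb2i, hsi⟩ := removable_beads n hn lam mui i hir
      obtain ⟨hb1j, hb2j, hsj⟩ := removable_beads n hn lam muj j hjr
      have hI1 : bInd lam (i+1) = 1 := by unfold bInd; rw [if_pos hb1i]
      have hI2 : bInd lam (j+1-n) = 0 := by unfold bInd; rw [if_neg hb2j]
      exact Or.inr (Or.inl ⟨hir, hjr, by omega⟩)
  · rintro ⟨⟨h1a, h1b, -⟩, ⟨h2a, h2b, -⟩⟩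
    exact hnotboth mui i i h1a h2a
  · rintro ⟨⟨h1a, h1b, -⟩, h2 | h2⟩
    · exact hnotboth muj j j h1b h2.2.1
    · exact hnotboth mui i i h1a h2.1
  · rintro ⟨⟨h1a, h1b, -⟩, h2 | h2⟩
    · exact hnotboth mui i i h2.1 h1a
    · exact hnotboth muj j j h2.2.1 h1b



end RibbonSchur
end
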